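/- arXiv:2410.17301 — 5 statements merged into one kernel-verified Lean document; each statement's English description precedes it below -/
import Mathlib

section
/- Off-diagonal Dirichlet bound: with couplings κ_{ij} of quality χ := min over {(x,y,i,j) : κ_{ij}(x,y)>0, x≠y} of a_i(x)a_j(y)π(x)Q(x,y) / (π̂(i)Q̂(i,j)κ_{ij}(x,y)), and Ψ jointly convex with Ψ(u,u)=0, one has (1/2) Σ_{i≠j} Σ_{x,y∈Ω} a_i(x)a_j(y)π(x)Q(x,y)Ψ(f(x),f(y)) ≥ χ · (1/2) Σ_{i,j∈I} π̂(i)Q̂(i,j)Ψ(f̂(i),f̂(j)) for every f : Ω → (0,∞). -/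
open Finset

lemma erase_to_ite' {α : Type*} [Fintype α] [DecidableEq α] (i : α) (v : α → ℝ) :
    ∑ j ∈ univ.erase i, v j = ∑ j, if i = j then 0 else v j := by
  rw [← Finset.sum_erase_add univ (fun j => if i = j then 0 else v j) (mem_univ i)]
  rw [if_pos rfl, add_zero]
  exact Finset.sum_congr rfl fun j hj => (if_neg (Finset.ne_of_mem_erase hj).symm).symm

lemma half_sym' {α : Type*} [Fintype α] (w g : α → α → ℝ) (hw : ∀ p q, w p q = w q p) :
    ∑ p, ∑ q, w p q * g p q = ∑ p, ∑ q, w p q * ((g p q + g q p) / 2) := by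
  have h : ∑ p, ∑ q, w p q * g q p = ∑ p, ∑ q, w p q * g p q := by
    rw [Finset.sum_comm]
    exact Finset.sum_congr rfl fun p _ => Finset.sum_congr rfl fun q _ => by rw [hw]
  have expand : ∀ p q, w p q * ((g p q + g q p) / 2) = w p q * g p q / 2 + w p q * g q p / 2 :=
    fun p q => by ring
  simp only [expand, Finset.sum_add_distrib, ← Finset.sum_div]
  rw [h]; ring

lemma erase_sum_swap' {α : Type*} [Fintype α] [DecidableEq α] (F : α → α → ℝ) :
    ∑ x, ∑ y ∈ univ.erase x, F x y = ∑ x, ∑ y ∈ univ.erase x, F y x := by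
  simp only [erase_to_ite']
  rw [Finset.sum_comm]
  exact Finset.sum_congr rfl fun x _ => Finset.sum_congr rfl fun y _ => by
    rcases eq_or_ne x y with h | h
    · simp [h]
    · rw [if_neg (Ne.symm h), if_neg h]

/-- off-diagonal Dirichlet bound via couplings of quality χ. -/
theorem fuzzy_offdiagonal_dirichlet_bound
    {Ω I : Type*} [Fintype Ω] [Fintype I] [DecidableEq Ω] [DecidableEq I]
    (π : Ω → ℝ) (Q : Ω → Ω → ℝ) (a : Ω → I → ℝ)
    (hπ0 : ∀ x, 0 ≤ π x) (hπ1 : ∑ x, π x = 1)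
    (hQnn : ∀ x y, x ≠ y → 0 ≤ Q x y)
    (hrev : ∀ x y, π x * Q x y = π y * Q y x)
    (ha0 : ∀ x i, 0 ≤ a x i) (ha1 : ∀ x i, a x i ≤ 1)
    (hasum : ∀ x, ∑ i, a x i = 1)
    (πhat : I → ℝ) (hπhat : ∀ i, πhat i = ∑ x, a x i * π x)
    (hπhatpos : ∀ i, 0 < πhat i)
    (πi : I → Ω → ℝ) (hπi : ∀ i x, πi i x = a x i * π x / πhat i)
    (Qhat : I → I → ℝ)
    (hQhat : ∀ i j, i ≠ j → Qhat i j = (1 / πhat i) *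
      ∑ x, ∑ y ∈ Finset.univ.erase x, a x i * a y j * π x * Q x y)
    -- couplings κ_{ij} of π_i and π_j, for pairs with Q̂(i,j) > 0
    (κ : I → I → Ω → Ω → ℝ)
    (hκ0 : ∀ i j x y, 0 ≤ κ i j x y)
    (hκsupp : ∀ i j, 0 < Qhat i j → ∀ x y, κ i j x y ≠ 0 → 0 < a x i ∧ 0 < a y j)
    (hκmargi : ∀ i j, 0 < Qhat i j → ∀ x, ∑ y, κ i j x y = πi i x)
    (hκmargj : ∀ i j, 0 < Qhat i j → ∀ y, ∑ x, κ i j x y = πi j y)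
    -- quality χ of the couplings
    (χ : ℝ) (hχ0 : 0 ≤ χ)
    (hχ : ∀ i j, 0 < Qhat i j → ∀ x y, x ≠ y → 0 < κ i j x y →
      χ * (πhat i * Qhat i j * κ i j x y) ≤ a x i * a y j * π x * Q x y)
    -- the convex kernel Ψ
    (Ψ : ℝ → ℝ → ℝ)
    (hΨconv : ConvexOn ℝ (Set.Ioi (0 : ℝ) ×ˢ Set.Ioi (0 : ℝ))
      (fun p : ℝ × ℝ => Ψ p.1 p.2))
    (hΨ0 : ∀ u, Ψ u u = 0)
    (f : Ω → ℝ) (hf : ∀ x, 0 < f x)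
    (fhat : I → ℝ) (hfhat : ∀ i, fhat i = ∑ x, πi i x * f x) :
    (1 / 2) * ∑ i, ∑ j ∈ Finset.univ.erase i, ∑ x, ∑ y,
        a x i * a y j * π x * Q x y * Ψ (f x) (f y) ≥
      χ * ((1 / 2) * ∑ i, ∑ j, πhat i * Qhat i j * Ψ (fhat i) (fhat j)) := by
  classical
  set S : Set (ℝ × ℝ) := Set.Ioi (0 : ℝ) ×ˢ Set.Ioi (0 : ℝ) with hSdef
  set Ψs : ℝ → ℝ → ℝ := fun u v => (Ψ u v + Ψ v u) / 2 with hΨsdef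
  set W : I × Ω → I × Ω → ℝ := fun p q =>
    if p.1 = q.1 then 0 else a p.2 p.1 * a q.2 q.1 * π p.2 * Q p.2 q.2 with hWdef
  set What : I → I → ℝ := fun i j => if i = j then 0 else πhat i * Qhat i j with hWhatdef
  -- basic facts
  have hΨs0 : ∀ u, Ψs u u = 0 := by intro u; simp [hΨsdef, hΨ0]
  have hΨsnn : ∀ u v, 0 < u → 0 < v → 0 ≤ Ψs u v := by
    intro u v hu hv
    have hmem1 : ((u, v) : ℝ × ℝ) ∈ S := ⟨Set.mem_Ioi.mpr hu, Set.mem_Ioi.mpr hv⟩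
    have hmem2 : ((v, u) : ℝ × ℝ) ∈ S := ⟨Set.mem_Ioi.mpr hv, Set.mem_Ioi.mpr hu⟩
    have h := hΨconv.2 hmem1 hmem2 (by norm_num : (0:ℝ) ≤ 1/2)
      (by norm_num : (0:ℝ) ≤ 1/2) (by norm_num)
    simp only [Prod.smul_mk, smul_eq_mul, Prod.mk_add_mk] at h
    rw [show (1/2 : ℝ) * v + 1/2 * u = 1/2 * u + 1/2 * v by ring] at h
    rw [hΨ0] at h
    simp only [hΨsdef]
    linarith
  have hΨsconv : ConvexOn ℝ S (fun p : ℝ × ℝ => Ψs p.1 p.2) := by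
    have hswap : ConvexOn ℝ S (fun p : ℝ × ℝ => Ψ p.2 p.1) := by
      refine ⟨hΨconv.1, ?_⟩
      rintro ⟨p1, p2⟩ hp ⟨q1, q2⟩ hq b c hb hc hbc
      have hp' : ((p2, p1) : ℝ × ℝ) ∈ S := ⟨hp.2, hp.1⟩
      have hq' : ((q2, q1) : ℝ × ℝ) ∈ S := ⟨hq.2, hq.1⟩
      have h := hΨconv.2 hp' hq' hb hc hbc
      simpa using h
    have h2 : ConvexOn ℝ S (fun p : ℝ × ℝ =>
        (1/2 : ℝ) • ((fun p : ℝ × ℝ => Ψ p.1 p.2) p + (fun p : ℝ × ℝ => Ψ p.2 p.1) p)) :=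
      ConvexOn.smul (by norm_num) (hΨconv.add hswap)
    have heq : (fun p : ℝ × ℝ => Ψs p.1 p.2) = (fun p : ℝ × ℝ =>
        (1/2 : ℝ) • ((fun p : ℝ × ℝ => Ψ p.1 p.2) p + (fun p : ℝ × ℝ => Ψ p.2 p.1) p)) := by
      funext p; simp [hΨsdef]; ring
    rw [heq]; exact h2
  have hWsym : ∀ p q, W p q = W q p := by
    rintro ⟨i, x⟩ ⟨j, y⟩
    simp only [hWdef]
    rcases eq_or_ne i j with h | h
    · rw [if_pos h, if_pos h.symm]
    · rw [if_neg h, if_neg (Ne.symm h)]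
      linear_combination a x i * a y j * hrev x y
  have hQhatnn : ∀ i j, i ≠ j → 0 ≤ Qhat i j := by
    intro i j hij
    rw [hQhat i j hij]
    apply mul_nonneg (one_div_nonneg.mpr (hπhatpos i).le)
    apply Finset.sum_nonneg; intro x _
    apply Finset.sum_nonneg; intro y hy
    have hxy : x ≠ y := (Finset.ne_of_mem_erase hy).symm
    exact mul_nonneg (mul_nonneg (mul_nonneg (ha0 x i) (ha0 y j)) (hπ0 x)) (hQnn x y hxy)
  have hWhatsym : ∀ i j, What i j = What j i := by
    intro i j
    simp only [hWhatdef]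
    rcases eq_or_ne i j with h | h
    · rw [if_pos h, if_pos h.symm]
    · rw [if_neg h, if_neg (Ne.symm h)]
      have e : ∀ k l, k ≠ l → πhat k * Qhat k l =
          ∑ x, ∑ y ∈ univ.erase x, a x k * a y l * π x * Q x y := by
        intro k l hkl
        rw [hQhat k l hkl, ← mul_assoc, mul_one_div, div_self (hπhatpos k).ne', one_mul]
      rw [e i j h, e j i (Ne.symm h),
        erase_sum_swap' (fun x y => a x j * a y i * π x * Q x y)]
      exact Finset.sum_congr rfl fun x _ => Finset.sum_congr rfl fun y _ => by
        linear_combination a x i * a y j * hrev x y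
  have htermnn : ∀ p q : I × Ω, 0 ≤ W p q * Ψs (f p.2) (f q.2) := by
    rintro ⟨i, x⟩ ⟨j, y⟩
    simp only [hWdef]
    rcases eq_or_ne i j with h | h
    · rw [if_pos h, zero_mul]
    · rw [if_neg h]
      rcases eq_or_ne x y with rfl | hxy
      · rw [hΨs0, mul_zero]
      · exact mul_nonneg
          (mul_nonneg (mul_nonneg (mul_nonneg (ha0 x i) (ha0 y j)) (hπ0 x)) (hQnn x y hxy))
          (hΨsnn _ _ (hf x) (hf y))
  -- rewrite the RHS double sum
  have hR : ∑ i, ∑ j, πhat i * Qhat i j * Ψ (fhat i) (fhat j)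
      = ∑ i, ∑ j, What i j * Ψs (fhat i) (fhat j) := by
    have h1 : ∑ i, ∑ j, πhat i * Qhat i j * Ψ (fhat i) (fhat j)
        = ∑ i, ∑ j, What i j * Ψ (fhat i) (fhat j) := by
      refine Finset.sum_congr rfl fun i _ => Finset.sum_congr rfl fun j _ => ?_
      simp only [hWhatdef]
      rcases eq_or_ne i j with rfl | h
      · rw [if_pos rfl, hΨ0, mul_zero, zero_mul]
      · rw [if_neg h]
    rw [h1, half_sym' What (fun i j => Ψ (fhat i) (fhat j)) hWhatsym]
  -- rewrite the LHS quadruple sum as a sum over products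
  have hT : ∑ i, ∑ j ∈ univ.erase i, ∑ x, ∑ y,
        a x i * a y j * π x * Q x y * Ψ (f x) (f y)
      = ∑ p : I × Ω, ∑ q : I × Ω, W p q * Ψ (f p.2) (f q.2) := by
    rw [Fintype.sum_prod_type]
    refine Finset.sum_congr rfl fun i _ => ?_
    simp only [Fintype.sum_prod_type]
    rw [Finset.sum_comm (γ := Ω) (α := I)]
    rw [erase_to_ite' i (fun j => ∑ x, ∑ y, a x i * a y j * π x * Q x y * Ψ (f x) (f y))]
    refine Finset.sum_congr rfl fun j _ => ?_
    rcases eq_or_ne i j with rfl | h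
    · simp [hWdef]
    · rw [if_neg h]
      refine Finset.sum_congr rfl fun x _ => Finset.sum_congr rfl fun y _ => ?_
      simp only [hWdef]
      rw [if_neg h]
  have hTsym : ∑ p : I × Ω, ∑ q : I × Ω, W p q * Ψ (f p.2) (f q.2)
      = ∑ p : I × Ω, ∑ q : I × Ω, W p q * Ψs (f p.2) (f q.2) :=
    half_sym' W (fun p q => Ψ (f p.2) (f q.2)) hWsym
  -- per-pair inequality
  have key : ∀ i j, χ * (What i j * Ψs (fhat i) (fhat j))
      ≤ ∑ x, ∑ y, W (i, x) (j, y) * Ψs (f x) (f y) := by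
    intro i j
    have hRHSnn : 0 ≤ ∑ x, ∑ y, W (i, x) (j, y) * Ψs (f x) (f y) :=
      Finset.sum_nonneg fun x _ => Finset.sum_nonneg fun y _ => htermnn (i, x) (j, y)
    rcases eq_or_ne i j with rfl | hij
    · simp only [hWhatdef, if_pos rfl, zero_mul, mul_zero]
      exact hRHSnn
    rcases (hQhatnn i j hij).lt_or_eq with hQpos | hQzero
    · -- Jensen case
      have hsum1 : ∑ p : Ω × Ω, κ i j p.1 p.2 = 1 := by
        rw [Fintype.sum_prod_type]
        calc ∑ x, ∑ y, κ i j x y = ∑ x, πi i x :=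
              Finset.sum_congr rfl fun x _ => hκmargi i j hQpos x
          _ = ∑ x, a x i * π x / πhat i :=
              Finset.sum_congr rfl fun x _ => hπi i x
          _ = (∑ x, a x i * π x) / πhat i := by rw [Finset.sum_div]
          _ = 1 := by rw [← hπhat]; exact div_self (hπhatpos i).ne'
      have hcenter : ∑ p : Ω × Ω, κ i j p.1 p.2 • ((f p.1, f p.2) : ℝ × ℝ)
          = (fhat i, fhat j) := by
        apply Prod.ext
        · rw [Prod.fst_sum]
          simp only [Prod.smul_mk, smul_eq_mul]
          rw [Fintype.sum_prod_type]
          calc ∑ x, ∑ y, κ i j x y * f x = ∑ x, (∑ y, κ i j x y) * f x :=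
                Finset.sum_congr rfl fun x _ => (Finset.sum_mul _ _ _).symm
            _ = ∑ x, πi i x * f x :=
                Finset.sum_congr rfl fun x _ => by rw [hκmargi i j hQpos x]
            _ = fhat i := (hfhat i).symm
        · rw [Prod.snd_sum]
          simp only [Prod.smul_mk, smul_eq_mul]
          rw [Fintype.sum_prod_type, Finset.sum_comm]
          calc ∑ y, ∑ x, κ i j x y * f y = ∑ y, (∑ x, κ i j x y) * f y :=
                Finset.sum_congr rfl fun y _ => (Finset.sum_mul _ _ _).symm
            _ = ∑ y, πi j y * f y :=
                Finset.sum_congr rfl fun y _ => by rw [hκmargj i j hQpos y]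
            _ = fhat j := (hfhat j).symm
      have hjensen := hΨsconv.map_sum_le (t := (univ : Finset (Ω × Ω)))
        (w := fun p : Ω × Ω => κ i j p.1 p.2)
        (p := fun p : Ω × Ω => ((f p.1, f p.2) : ℝ × ℝ))
        (fun p _ => hκ0 i j p.1 p.2) hsum1
        (fun p _ => ⟨Set.mem_Ioi.mpr (hf p.1), Set.mem_Ioi.mpr (hf p.2)⟩)
      rw [hcenter] at hjensen
      simp only [smul_eq_mul] at hjensen
      -- hjensen : Ψs (fhat i) (fhat j) ≤ ∑ p, κ i j p.1 p.2 * Ψs (f p.1) (f p.2)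
      have hc : 0 ≤ χ * (πhat i * Qhat i j) :=
        mul_nonneg hχ0 (mul_nonneg (hπhatpos i).le hQpos.le)
      have step1 : χ * (What i j * Ψs (fhat i) (fhat j))
          ≤ ∑ p : Ω × Ω, χ * (πhat i * Qhat i j) * (κ i j p.1 p.2 * Ψs (f p.1) (f p.2)) := by
        simp only [hWhatdef]; rw [if_neg hij]
        calc χ * (πhat i * Qhat i j * Ψs (fhat i) (fhat j))
            = χ * (πhat i * Qhat i j) * Ψs (fhat i) (fhat j) := by ring
          _ ≤ χ * (πhat i * Qhat i j) * ∑ p : Ω × Ω, κ i j p.1 p.2 * Ψs (f p.1) (f p.2) :=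
              mul_le_mul_of_nonneg_left hjensen hc
          _ = ∑ p : Ω × Ω, χ * (πhat i * Qhat i j) * (κ i j p.1 p.2 * Ψs (f p.1) (f p.2)) := by
              rw [Finset.mul_sum]
      have step2 : ∑ p : Ω × Ω, χ * (πhat i * Qhat i j) * (κ i j p.1 p.2 * Ψs (f p.1) (f p.2))
          ≤ ∑ p : Ω × Ω, W (i, p.1) (j, p.2) * Ψs (f p.1) (f p.2) := by
        apply Finset.sum_le_sum
        rintro ⟨x, y⟩ _
        simp only [hWdef]
        rw [if_neg hij]
        rcases eq_or_ne x y with rfl | hxy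
        · rw [hΨs0]; simp
        · rcases (hκ0 i j x y).lt_or_eq with hκpos | hκzero
          · have hb := hχ i j hQpos x y hxy hκpos
            have hψnn := hΨsnn (f x) (f y) (hf x) (hf y)
            calc χ * (πhat i * Qhat i j) * (κ i j x y * Ψs (f x) (f y))
                = χ * (πhat i * Qhat i j * κ i j x y) * Ψs (f x) (f y) := by ring
              _ ≤ a x i * a y j * π x * Q x y * Ψs (f x) (f y) :=
                  mul_le_mul_of_nonneg_right hb hψnn
          · rw [← hκzero]
            rw [zero_mul, mul_zero]
            exact mul_nonneg
              (mul_nonneg (mul_nonneg (mul_nonneg (ha0 x i) (ha0 y j)) (hπ0 x)) (hQnn x y hxy))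
              (hΨsnn (f x) (f y) (hf x) (hf y))
      have hfin : ∑ p : Ω × Ω, W (i, p.1) (j, p.2) * Ψs (f p.1) (f p.2)
          = ∑ x, ∑ y, W (i, x) (j, y) * Ψs (f x) (f y) := by
        rw [Fintype.sum_prod_type]
      exact le_trans step1 (by rw [← hfin]; exact step2)
    · -- Qhat i j = 0
      simp only [hWhatdef]; rw [if_neg hij, ← hQzero]
      rw [mul_zero, zero_mul, mul_zero]
      exact hRHSnn
  -- assemble
  have hmain : χ * ∑ i, ∑ j, πhat i * Qhat i j * Ψ (fhat i) (fhat j)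
      ≤ ∑ i, ∑ j ∈ univ.erase i, ∑ x, ∑ y,
          a x i * a y j * π x * Q x y * Ψ (f x) (f y) := by
    rw [hR, hT, hTsym]
    have hTprod : ∑ p : I × Ω, ∑ q : I × Ω, W p q * Ψs (f p.2) (f q.2)
        = ∑ i, ∑ j, ∑ x, ∑ y, W (i, x) (j, y) * Ψs (f x) (f y) := by
      rw [Fintype.sum_prod_type]
      refine Finset.sum_congr rfl fun i _ => ?_
      simp only [Fintype.sum_prod_type]
      rw [Finset.sum_comm (γ := Ω) (α := I)]
    rw [hTprod, Finset.mul_sum]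
    refine Finset.sum_le_sum fun i _ => ?_
    rw [Finset.mul_sum]
    exact Finset.sum_le_sum fun j _ => key i j
  rw [ge_iff_le]
  nlinarith [hmain]
end

section
/- Fuzzy decomposition bound for the Poincaré constant: λ(Q) ≥ min{ χ·λ(Q̂), min_{i∈I} λ(Q_i) }, where λ(R) denotes the largest constant λ such that E_R(f,f) ≥ λ Var(f) for all positive functions f on the state space of R. -/
open Finset

lemma wcs' {α : Type*} (s : Finset α) (w v : α → ℝ) (hw : ∀ x ∈ s, 0 ≤ w x) :
    (∑ x ∈ s, w x * v x) ^ 2 ≤ (∑ x ∈ s, w x) * (∑ x ∈ s, w x * v x ^ 2) :=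
  Finset.sum_sq_le_sum_mul_sum_of_sq_eq_mul s hw
    (fun x hx => mul_nonneg (hw x hx) (sq_nonneg _)) (fun x _ => by ring)

lemma sum_sum_weights {I : Type*} [Fintype I] (u v : I → ℝ)
    (hu : ∑ i, u i = 1) (hv : ∑ j, v j = 1) (C : ℝ) :
    ∑ i, ∑ j, u i * v j * C = C := by
  simp_rw [mul_assoc, ← Finset.mul_sum, ← Finset.sum_mul, hv, one_mul]
  rw [hu, one_mul]

lemma swap4 {Ω I : Type*} [Fintype Ω] [Fintype I] (F : Ω → Ω → I → I → ℝ) :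
    (∑ x, ∑ y, ∑ i, ∑ j, F x y i j) = ∑ i, ∑ j, ∑ x, ∑ y, F x y i j := by
  calc (∑ x, ∑ y, ∑ i, ∑ j, F x y i j)
      = ∑ x, ∑ i, ∑ y, ∑ j, F x y i j :=
        Finset.sum_congr rfl fun x _ => Finset.sum_comm
    _ = ∑ i, ∑ x, ∑ y, ∑ j, F x y i j := Finset.sum_comm
    _ = ∑ i, ∑ x, ∑ j, ∑ y, F x y i j :=
        Finset.sum_congr rfl fun i _ => Finset.sum_congr rfl fun x _ => Finset.sum_comm
    _ = ∑ i, ∑ j, ∑ x, ∑ y, F x y i j :=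
        Finset.sum_congr rfl fun i _ => Finset.sum_comm
/-- fuzzy decomposition bound for the Poincaré constant:
λ(Q) ≥ min{χ λ(Q̂), min_i λ(Q_i)}. -/
theorem fuzzy_decomposition_poincare
    {Ω I : Type*} [Fintype Ω] [Fintype I] [DecidableEq Ω] [DecidableEq I] [Nonempty I]
    (π : Ω → ℝ) (Q : Ω → Ω → ℝ) (a : Ω → I → ℝ)
    (hπ0 : ∀ x, 0 ≤ π x) (hπ1 : ∑ x, π x = 1)
    (hQnn : ∀ x y, x ≠ y → 0 ≤ Q x y)
    (hrev : ∀ x y, π x * Q x y = π y * Q y x)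
    (ha0 : ∀ x i, 0 ≤ a x i) (ha1 : ∀ x i, a x i ≤ 1)
    (hasum : ∀ x, ∑ i, a x i = 1)
    (πhat : I → ℝ) (hπhat : ∀ i, πhat i = ∑ x, a x i * π x)
    (hπhatpos : ∀ i, 0 < πhat i)
    (πi : I → Ω → ℝ) (hπi : ∀ i x, πi i x = a x i * π x / πhat i)
    (Qhat : I → I → ℝ)
    (hQhat : ∀ i j, i ≠ j → Qhat i j = (1 / πhat i) *
      ∑ x, ∑ y ∈ Finset.univ.erase x, a x i * a y j * π x * Q x y)
    -- couplings κ_{ij} of π_i and π_j, for pairs with Q̂(i,j) > 0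
    (κ : I → I → Ω → Ω → ℝ)
    (hκ0 : ∀ i j x y, 0 ≤ κ i j x y)
    (hκsupp : ∀ i j, 0 < Qhat i j → ∀ x y, κ i j x y ≠ 0 → 0 < a x i ∧ 0 < a y j)
    (hκmargi : ∀ i j, 0 < Qhat i j → ∀ x, ∑ y, κ i j x y = πi i x)
    (hκmargj : ∀ i j, 0 < Qhat i j → ∀ y, ∑ x, κ i j x y = πi j y)
    -- quality χ of the couplings
    (χ : ℝ) (hχ0 : 0 ≤ χ)
    (hχ : ∀ i j, 0 < Qhat i j → ∀ x y, x ≠ y → 0 < κ i j x y →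
      χ * (πhat i * Qhat i j * κ i j x y) ≤ a x i * a y j * π x * Q x y)
    -- λ̂ is a valid Poincaré constant for the projection chain (Q̂, π̂)
    (lamhat : ℝ)
    (hproj : ∀ g : I → ℝ, (∀ i, 0 < g i) →
      (1 / 2) * ∑ i, ∑ j ∈ Finset.univ.erase i, πhat i * Qhat i j * (g i - g j) ^ 2 ≥
        lamhat * ((∑ i, πhat i * (g i) ^ 2) - (∑ i, πhat i * g i) ^ 2))
    -- λ_i is a valid Poincaré constant for each restriction chain (Q_i, π_i)
    (lam : I → ℝ)
    (hres : ∀ i, ∀ f : Ω → ℝ, (∀ x, 0 < f x) →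
      (1 / 2) * ∑ x ∈ Finset.univ.filter (fun x => 0 < a x i),
          ∑ y ∈ (Finset.univ.filter (fun y => 0 < a y i)).erase x,
            πi i x * (a y i * Q x y) * (f x - f y) ^ 2 ≥
        lam i * ((∑ x ∈ Finset.univ.filter (fun x => 0 < a x i), πi i x * (f x) ^ 2) -
          (∑ x ∈ Finset.univ.filter (fun x => 0 < a x i), πi i x * f x) ^ 2)) :
    -- conclusion: min{χ λ̂, min_i λ_i} is a valid Poincaré constant for (Q, π)
    ∀ f : Ω → ℝ, (∀ x, 0 < f x) →
      (1 / 2) * ∑ x, ∑ y ∈ Finset.univ.erase x, π x * Q x y * (f x - f y) ^ 2 ≥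
        min (χ * lamhat) (Finset.univ.inf' Finset.univ_nonempty lam) *
          ((∑ x, π x * (f x) ^ 2) - (∑ x, π x * f x) ^ 2) := by
  intro f hf
  classical
  set g : I → ℝ := fun i => ∑ x, πi i x * f x with hgdef
  have hgval : ∀ i, g i = ∑ x, πi i x * f x := fun i => by rw [hgdef]
  have hπhatne : ∀ i, πhat i ≠ 0 := fun i => (hπhatpos i).ne'
  have hkey : ∀ i x, πhat i * πi i x = a x i * π x := fun i x => by
    rw [hπi, mul_comm, div_mul_cancel₀ _ (hπhatne i)]
  have hπinn : ∀ i x, 0 ≤ πi i x := fun i x => by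
    rw [hπi]
    exact div_nonneg (mul_nonneg (ha0 x i) (hπ0 x)) (hπhatpos i).le
  have hazero : ∀ i x, ¬ (0 < a x i) → a x i = 0 := fun i x h =>
    le_antisymm (not_lt.1 h) (ha0 x i)
  have hπizero : ∀ i x, ¬ (0 < a x i) → πi i x = 0 := fun i x h => by
    rw [hπi, hazero i x h, zero_mul, zero_div]
  have hπisum : ∀ i, ∑ x, πi i x = 1 := by
    intro i
    have h1 : πhat i * ∑ x, πi i x = πhat i * 1 := by
      rw [Finset.mul_sum, mul_one]
      simp_rw [hkey]
      exact (hπhat i).symm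
    exact mul_left_cancel₀ (hπhatne i) h1
  have hg0 : ∀ i, 0 < g i := by
    intro i
    rw [hgval]
    apply Finset.sum_pos' (fun x _ => mul_nonneg (hπinn i x) (hf x).le)
    have hex : ∃ x, πi i x ≠ 0 := by
      by_contra h
      push_neg at h
      have h1 := hπisum i
      simp only [h, Finset.sum_const_zero] at h1
      norm_num at h1
    obtain ⟨x, hx⟩ := hex
    exact ⟨x, Finset.mem_univ x, mul_pos ((hπinn i x).lt_of_ne (Ne.symm hx)) (hf x)⟩
  have hQhatnn : ∀ i j, i ≠ j → 0 ≤ Qhat i j := by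
    intro i j hij
    rw [hQhat i j hij]
    apply mul_nonneg (one_div_nonneg.mpr (hπhatpos i).le)
    refine Finset.sum_nonneg fun x _ => Finset.sum_nonneg fun y hy => ?_
    have hyx : y ≠ x := Finset.ne_of_mem_erase hy
    exact mul_nonneg (mul_nonneg (mul_nonneg (ha0 x i) (ha0 y j)) (hπ0 x))
      (hQnn x y (Ne.symm hyx))
  have hπhat1 : ∑ i, πhat i = 1 := by
    simp_rw [hπhat]
    rw [Finset.sum_comm]
    simp_rw [← Finset.sum_mul, hasum, one_mul]
    exact hπ1
  -- weighted sums over classes reconstruct π-sums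
  have hAB : ∀ h : Ω → ℝ, ∑ i, πhat i * ∑ x, πi i x * h x = ∑ x, π x * h x := by
    intro h
    simp_rw [Finset.mul_sum, ← mul_assoc, hkey, mul_assoc]
    rw [Finset.sum_comm]
    exact Finset.sum_congr rfl fun x _ => by rw [← Finset.sum_mul, hasum, one_mul]
  -- splitting of the Dirichlet form
  have hsplitj : ∀ i, (∑ j, ∑ x, ∑ y, a x i * a y j * (π x * Q x y * (f x - f y) ^ 2))
      = (∑ x, ∑ y, a x i * a y i * π x * Q x y * (f x - f y) ^ 2)
        + ∑ j ∈ univ.erase i, ∑ x, ∑ y, a x i * a y j * π x * Q x y * (f x - f y) ^ 2 := by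
    intro i
    rw [← Finset.add_sum_erase _ _ (Finset.mem_univ i)]
    congr 1
    · exact Finset.sum_congr rfl fun x _ => Finset.sum_congr rfl fun y _ => by ring
    · exact Finset.sum_congr rfl fun j _ => Finset.sum_congr rfl fun x _ =>
        Finset.sum_congr rfl fun y _ => by ring
  have hEsplit : (∑ x, ∑ y ∈ univ.erase x, π x * Q x y * (f x - f y) ^ 2)
      = (∑ i, ∑ x, ∑ y, a x i * a y i * π x * Q x y * (f x - f y) ^ 2)
        + ∑ i, ∑ j ∈ univ.erase i, ∑ x, ∑ y, a x i * a y j * π x * Q x y * (f x - f y) ^ 2 := by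
    have hfull : (∑ x, ∑ y ∈ univ.erase x, π x * Q x y * (f x - f y) ^ 2)
        = ∑ x, ∑ y, π x * Q x y * (f x - f y) ^ 2 := by
      refine Finset.sum_congr rfl fun x _ => ?_
      rw [Finset.sum_erase_eq_sub (Finset.mem_univ x)]
      simp
    rw [hfull]
    calc (∑ x, ∑ y, π x * Q x y * (f x - f y) ^ 2)
        = ∑ x, ∑ y, ∑ i, ∑ j, a x i * a y j * (π x * Q x y * (f x - f y) ^ 2) :=
          Finset.sum_congr rfl fun x _ => Finset.sum_congr rfl fun y _ =>
            (sum_sum_weights _ _ (hasum x) (hasum y) _).symm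
      _ = ∑ i, ∑ j, ∑ x, ∑ y, a x i * a y j * (π x * Q x y * (f x - f y) ^ 2) := swap4 _
      _ = _ := by rw [← Finset.sum_add_distrib]; exact Finset.sum_congr rfl fun i _ => hsplitj i
  -- filtered sums equal full sums
  have hfiltV : ∀ (i : I) (h : Ω → ℝ),
      (∑ x ∈ univ.filter (fun x => 0 < a x i), πi i x * h x) = ∑ x, πi i x * h x := by
    intro i h
    apply Finset.sum_subset (Finset.filter_subset _ _)
    intro x _ hx
    rw [hπizero i x (by simpa using hx), zero_mul]
  have hfiltE : ∀ i,
      (∑ x ∈ univ.filter (fun x => 0 < a x i),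
        ∑ y ∈ (univ.filter (fun y => 0 < a y i)).erase x,
          πi i x * (a y i * Q x y) * (f x - f y) ^ 2)
      = ∑ x, ∑ y, πi i x * (a y i * Q x y) * (f x - f y) ^ 2 := by
    intro i
    have h1 : ∀ x : Ω,
        (∑ y ∈ (univ.filter (fun y => 0 < a y i)).erase x,
          πi i x * (a y i * Q x y) * (f x - f y) ^ 2)
        = ∑ y, πi i x * (a y i * Q x y) * (f x - f y) ^ 2 := by
      intro x
      have e1 : (∑ y ∈ (univ.filter (fun y => 0 < a y i)).erase x,
            πi i x * (a y i * Q x y) * (f x - f y) ^ 2)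
          = ∑ y ∈ univ.erase x, πi i x * (a y i * Q x y) * (f x - f y) ^ 2 := by
        apply Finset.sum_subset (Finset.erase_subset_erase x (Finset.filter_subset _ _))
        intro y hy hys
        have hyx : y ≠ x := (Finset.mem_erase.1 hy).1
        have hz : a y i = 0 := hazero i y fun hpos =>
          hys (Finset.mem_erase.2 ⟨hyx, Finset.mem_filter.2 ⟨Finset.mem_univ y, hpos⟩⟩)
        simp [hz]
      have e2 : (∑ y ∈ univ.erase x, πi i x * (a y i * Q x y) * (f x - f y) ^ 2)
          = ∑ y, πi i x * (a y i * Q x y) * (f x - f y) ^ 2 := by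
        rw [Finset.sum_erase_eq_sub (Finset.mem_univ x)]
        simp
      rw [e1, e2]
    calc (∑ x ∈ univ.filter (fun x => 0 < a x i),
          ∑ y ∈ (univ.filter (fun y => 0 < a y i)).erase x,
            πi i x * (a y i * Q x y) * (f x - f y) ^ 2)
        = ∑ x ∈ univ.filter (fun x => 0 < a x i),
            ∑ y, πi i x * (a y i * Q x y) * (f x - f y) ^ 2 :=
          Finset.sum_congr rfl fun x _ => h1 x
      _ = ∑ x, ∑ y, πi i x * (a y i * Q x y) * (f x - f y) ^ 2 := by
          apply Finset.sum_subset (Finset.filter_subset _ _)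
          intro x _ hx
          have hz : πi i x = 0 := hπizero i x (by simpa using hx)
          simp [hz]
  -- scaled restriction Dirichlet forms
  have hdiagi : ∀ i, πhat i * ∑ x, ∑ y, πi i x * (a y i * Q x y) * (f x - f y) ^ 2
      = ∑ x, ∑ y, a x i * a y i * π x * Q x y * (f x - f y) ^ 2 := by
    intro i
    rw [Finset.mul_sum]
    refine Finset.sum_congr rfl fun x _ => ?_
    rw [Finset.mul_sum]
    refine Finset.sum_congr rfl fun y _ => ?_
    calc πhat i * (πi i x * (a y i * Q x y) * (f x - f y) ^ 2)
        = (πhat i * πi i x) * (a y i * Q x y * (f x - f y) ^ 2) := by ring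
      _ = (a x i * π x) * (a y i * Q x y * (f x - f y) ^ 2) := by rw [hkey]
      _ = a x i * a y i * π x * Q x y * (f x - f y) ^ 2 := by ring
  -- restriction Poincaré, unfiltered
  have hresi : ∀ i, lam i * ((∑ x, πi i x * f x ^ 2) - g i ^ 2)
      ≤ (1 / 2) * ∑ x, ∑ y, πi i x * (a y i * Q x y) * (f x - f y) ^ 2 := by
    intro i
    have h := hres i f hf
    rw [hfiltE i, hfiltV i (fun x => f x ^ 2), hfiltV i f] at h
    rw [hgval i]
    exact h
  -- variances are nonnegative
  have hVari_nn : ∀ i, 0 ≤ (∑ x, πi i x * f x ^ 2) - g i ^ 2 := by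
    intro i
    have h := wcs' univ (πi i) f (fun x _ => hπinn i x)
    rw [hπisum i, one_mul] at h
    rw [hgval i]
    linarith
  have hVarhat_nn : 0 ≤ (∑ i, πhat i * g i ^ 2) - (∑ i, πhat i * g i) ^ 2 := by
    have h := wcs' univ πhat g (fun i _ => (hπhatpos i).le)
    rw [hπhat1, one_mul] at h
    linarith
  -- variance decomposition
  have hVar : (∑ x, π x * f x ^ 2) - (∑ x, π x * f x) ^ 2
      = (∑ i, πhat i * ((∑ x, πi i x * f x ^ 2) - g i ^ 2))
        + ((∑ i, πhat i * g i ^ 2) - (∑ i, πhat i * g i) ^ 2) := by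
    have hA : ∑ i, πhat i * ∑ x, πi i x * f x ^ 2 = ∑ x, π x * f x ^ 2 :=
      hAB (fun x => f x ^ 2)
    have hB : ∑ i, πhat i * g i = ∑ x, π x * f x := by
      simp_rw [hgval]
      exact hAB f
    simp_rw [mul_sub]
    rw [Finset.sum_sub_distrib, hA, hB]
    ring
  -- off-diagonal terms are nonnegative
  have hoffnn : ∀ i j : I, 0 ≤ ∑ x, ∑ y, a x i * a y j * π x * Q x y * (f x - f y) ^ 2 := by
    intro i j
    refine Finset.sum_nonneg fun x _ => Finset.sum_nonneg fun y _ => ?_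
    rcases eq_or_ne x y with rfl | hxy
    · simp
    · exact mul_nonneg (mul_nonneg (mul_nonneg (mul_nonneg (ha0 x i) (ha0 y j)) (hπ0 x))
        (hQnn x y hxy)) (sq_nonneg _)
  -- coupling comparison for each off-diagonal pair
  have hoff : ∀ i j, i ≠ j →
      χ * (πhat i * Qhat i j * (g i - g j) ^ 2)
        ≤ ∑ x, ∑ y, a x i * a y j * π x * Q x y * (f x - f y) ^ 2 := by
    intro i j hij
    rcases (hQhatnn i j hij).lt_or_eq with hQpos | hQ0
    · have hκi := hκmargi i j hQpos
      have hκj := hκmargj i j hQpos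
      have hdiff : g i - g j = ∑ x, ∑ y, κ i j x y * (f x - f y) := by
        have h1 : g i = ∑ x, ∑ y, κ i j x y * f x := by
          rw [hgval i]
          exact Finset.sum_congr rfl fun x _ => by rw [← hκi x, Finset.sum_mul]
        have h2 : g j = ∑ x, ∑ y, κ i j x y * f y := by
          rw [hgval j, Finset.sum_comm (s := (univ : Finset Ω)) (t := (univ : Finset Ω))
            (f := fun x y => κ i j x y * f y)]
          exact Finset.sum_congr rfl fun y _ => by rw [← hκj y, Finset.sum_mul]
        rw [h1, h2, ← Finset.sum_sub_distrib]
        refine Finset.sum_congr rfl fun x _ => ?_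
        rw [← Finset.sum_sub_distrib]
        exact Finset.sum_congr rfl fun y _ => by ring
      have hCS : (g i - g j) ^ 2 ≤ ∑ x, ∑ y, κ i j x y * (f x - f y) ^ 2 := by
        rw [hdiff]
        have hκ1 : ∑ p : Ω × Ω, κ i j p.1 p.2 = 1 := by
          rw [Fintype.sum_prod_type]
          simp_rw [hκi]
          exact hπisum i
        have h := wcs' univ (fun p : Ω × Ω => κ i j p.1 p.2) (fun p => f p.1 - f p.2)
          (fun p _ => hκ0 i j p.1 p.2)
        rw [hκ1, one_mul] at h
        calc (∑ x, ∑ y, κ i j x y * (f x - f y)) ^ 2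
            = (∑ p : Ω × Ω, κ i j p.1 p.2 * (f p.1 - f p.2)) ^ 2 := by
              rw [Fintype.sum_prod_type]
          _ ≤ ∑ p : Ω × Ω, κ i j p.1 p.2 * (f p.1 - f p.2) ^ 2 := h
          _ = ∑ x, ∑ y, κ i j x y * (f x - f y) ^ 2 := Fintype.sum_prod_type _
      have h0 : 0 ≤ χ * (πhat i * Qhat i j) :=
        mul_nonneg hχ0 (mul_nonneg (hπhatpos i).le hQpos.le)
      have hmono : χ * (πhat i * Qhat i j * (g i - g j) ^ 2)
          ≤ χ * (πhat i * Qhat i j * (∑ x, ∑ y, κ i j x y * (f x - f y) ^ 2)) := by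
        calc χ * (πhat i * Qhat i j * (g i - g j) ^ 2)
            = (χ * (πhat i * Qhat i j)) * (g i - g j) ^ 2 := by ring
          _ ≤ (χ * (πhat i * Qhat i j)) * (∑ x, ∑ y, κ i j x y * (f x - f y) ^ 2) :=
              mul_le_mul_of_nonneg_left hCS h0
          _ = χ * (πhat i * Qhat i j * (∑ x, ∑ y, κ i j x y * (f x - f y) ^ 2)) := by ring
      refine hmono.trans ?_
      have hrw : χ * (πhat i * Qhat i j * (∑ x, ∑ y, κ i j x y * (f x - f y) ^ 2))
          = ∑ x, ∑ y, χ * (πhat i * Qhat i j * κ i j x y) * (f x - f y) ^ 2 := by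
        simp_rw [Finset.mul_sum]
        exact Finset.sum_congr rfl fun x _ => Finset.sum_congr rfl fun y _ => by ring
      rw [hrw]
      refine Finset.sum_le_sum fun x _ => Finset.sum_le_sum fun y _ => ?_
      rcases eq_or_ne x y with rfl | hxy
      · simp
      rcases (hκ0 i j x y).lt_or_eq with hκp | hκz
      · exact mul_le_mul_of_nonneg_right (hχ i j hQpos x y hxy hκp) (sq_nonneg _)
      · rw [← hκz]
        have : 0 ≤ a x i * a y j * π x * Q x y * (f x - f y) ^ 2 :=
          mul_nonneg (mul_nonneg (mul_nonneg (mul_nonneg (ha0 x i) (ha0 y j)) (hπ0 x))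
            (hQnn x y hxy)) (sq_nonneg _)
        simpa using this
    · rw [← hQ0]
      simpa using hoffnn i j
  -- projection Poincaré, scaled by χ
  have hprojχ : (χ * lamhat) * ((∑ i, πhat i * g i ^ 2) - (∑ i, πhat i * g i) ^ 2)
      ≤ (1 / 2) * ∑ i, ∑ j ∈ univ.erase i,
          ∑ x, ∑ y, a x i * a y j * π x * Q x y * (f x - f y) ^ 2 := by
    have h1 := hproj g hg0
    have h3 : χ * (∑ i, ∑ j ∈ univ.erase i, πhat i * Qhat i j * (g i - g j) ^ 2)
        ≤ ∑ i, ∑ j ∈ univ.erase i, ∑ x, ∑ y,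
            a x i * a y j * π x * Q x y * (f x - f y) ^ 2 := by
      rw [Finset.mul_sum]
      refine Finset.sum_le_sum fun i _ => ?_
      rw [Finset.mul_sum]
      refine Finset.sum_le_sum fun j hj => ?_
      exact hoff i j (Ne.symm (Finset.mem_erase.1 hj).1)
    have h2 : χ * (lamhat * ((∑ i, πhat i * g i ^ 2) - (∑ i, πhat i * g i) ^ 2))
        ≤ χ * ((1 / 2) * ∑ i, ∑ j ∈ univ.erase i, πhat i * Qhat i j * (g i - g j) ^ 2) :=
      mul_le_mul_of_nonneg_left h1 hχ0
    nlinarith [h2, h3]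
  -- assemble
  rw [ge_iff_le]
  set m := min (χ * lamhat) (Finset.univ.inf' Finset.univ_nonempty lam) with hm
  have hm1 : m ≤ χ * lamhat := min_le_left _ _
  have hm2 : ∀ i, m ≤ lam i := fun i =>
    (min_le_right _ _).trans (Finset.inf'_le _ (Finset.mem_univ i))
  have hstep2 : ∀ i, m * (πhat i * ((∑ x, πi i x * f x ^ 2) - g i ^ 2))
      ≤ πhat i * ((1 / 2) * ∑ x, ∑ y, πi i x * (a y i * Q x y) * (f x - f y) ^ 2) := by
    intro i
    have hnn : 0 ≤ πhat i * ((∑ x, πi i x * f x ^ 2) - g i ^ 2) :=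
      mul_nonneg (hπhatpos i).le (hVari_nn i)
    calc m * (πhat i * ((∑ x, πi i x * f x ^ 2) - g i ^ 2))
        ≤ lam i * (πhat i * ((∑ x, πi i x * f x ^ 2) - g i ^ 2)) :=
          mul_le_mul_of_nonneg_right (hm2 i) hnn
      _ = πhat i * (lam i * ((∑ x, πi i x * f x ^ 2) - g i ^ 2)) := by ring
      _ ≤ πhat i * ((1 / 2) * ∑ x, ∑ y, πi i x * (a y i * Q x y) * (f x - f y) ^ 2) :=
          mul_le_mul_of_nonneg_left (hresi i) (hπhatpos i).le
  have hstep3 : (∑ i, m * (πhat i * ((∑ x, πi i x * f x ^ 2) - g i ^ 2)))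
      ≤ (1 / 2) * ∑ i, ∑ x, ∑ y, a x i * a y i * π x * Q x y * (f x - f y) ^ 2 := by
    calc (∑ i, m * (πhat i * ((∑ x, πi i x * f x ^ 2) - g i ^ 2)))
        ≤ ∑ i, πhat i * ((1 / 2) * ∑ x, ∑ y, πi i x * (a y i * Q x y) * (f x - f y) ^ 2) :=
          Finset.sum_le_sum fun i _ => hstep2 i
      _ = (1 / 2) * ∑ i, πhat i * ∑ x, ∑ y, πi i x * (a y i * Q x y) * (f x - f y) ^ 2 := by
          rw [Finset.mul_sum]
          exact Finset.sum_congr rfl fun i _ => by ring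
      _ = (1 / 2) * ∑ i, ∑ x, ∑ y, a x i * a y i * π x * Q x y * (f x - f y) ^ 2 := by
          rw [Finset.mul_sum, Finset.mul_sum]
          exact Finset.sum_congr rfl fun i _ => by rw [hdiagi i]
  have hstep4 : m * ((∑ i, πhat i * g i ^ 2) - (∑ i, πhat i * g i) ^ 2)
      ≤ (1 / 2) * ∑ i, ∑ j ∈ univ.erase i,
          ∑ x, ∑ y, a x i * a y j * π x * Q x y * (f x - f y) ^ 2 :=
    (mul_le_mul_of_nonneg_right hm1 hVarhat_nn).trans hprojχ
  calc m * ((∑ x, π x * f x ^ 2) - (∑ x, π x * f x) ^ 2)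
      = (∑ i, m * (πhat i * ((∑ x, πi i x * f x ^ 2) - g i ^ 2)))
        + m * ((∑ i, πhat i * g i ^ 2) - (∑ i, πhat i * g i) ^ 2) := by
        rw [hVar, mul_add, Finset.mul_sum]
    _ ≤ (1 / 2) * (∑ i, ∑ x, ∑ y, a x i * a y i * π x * Q x y * (f x - f y) ^ 2)
        + (1 / 2) * ∑ i, ∑ j ∈ univ.erase i,
            ∑ x, ∑ y, a x i * a y j * π x * Q x y * (f x - f y) ^ 2 :=
        add_le_add hstep3 hstep4
    _ = (1 / 2) * ((∑ i, ∑ x, ∑ y, a x i * a y i * π x * Q x y * (f x - f y) ^ 2)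
        + ∑ i, ∑ j ∈ univ.erase i,
            ∑ x, ∑ y, a x i * a y j * π x * Q x y * (f x - f y) ^ 2) := by ring
    _ = (1 / 2) * ∑ x, ∑ y ∈ univ.erase x, π x * Q x y * (f x - f y) ^ 2 := by rw [hEsplit]
end

section
/- Fuzzy decomposition bound for the modified log-Sobolev constant: α(Q) ≥ min{ χ·α(Q̂), min_{i∈I} α(Q_i) }, where α(R) is the largest constant α such that E_R(f, log f) ≥ α Ent(f) for all f > 0. -/
open Finset

lemma psi_nonneg {x y : ℝ} (hx : 0 < x) (hy : 0 < y) :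
    0 ≤ (x - y) * (Real.log x - Real.log y) := by
  rcases le_total x y with h | h
  · nlinarith [Real.log_le_log hx h]
  · exact mul_nonneg (by linarith) (sub_nonneg.mpr (Real.log_le_log hy h))

lemma mylog_sum {ι : Type*} [DecidableEq ι] (s : Finset ι) (a b : ι → ℝ)
    (ha : ∀ k ∈ s, 0 ≤ a k) (hb : ∀ k ∈ s, 0 ≤ b k)
    (hab : ∀ k ∈ s, b k = 0 → a k = 0) :
    (∑ k ∈ s, a k) * Real.log ((∑ k ∈ s, a k) / (∑ k ∈ s, b k)) ≤
      ∑ k ∈ s, a k * Real.log (a k / b k) := by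
  classical
  have hbne : ∀ k ∈ s, b k ≠ 0 → 0 < b k := fun k hk h => (hb k hk).lt_of_ne (Ne.symm h)
  have hane : ∀ k ∈ s, a k ≠ 0 → 0 < b k := fun k hk h =>
    hbne k hk (fun hb0 => h (hab k hk hb0))
  set t := s.filter (fun k => 0 < b k) with ht
  have hA : ∑ k ∈ t, a k = ∑ k ∈ s, a k := Finset.sum_filter_of_ne hane
  have hB : ∑ k ∈ t, b k = ∑ k ∈ s, b k := Finset.sum_filter_of_ne hbne
  have hR : ∑ k ∈ t, a k * Real.log (a k / b k) = ∑ k ∈ s, a k * Real.log (a k / b k) :=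
    Finset.sum_filter_of_ne (fun k hk h => hane k hk (fun h0 => h (by simp [h0])))
  rw [← hA, ← hB, ← hR]
  rcases t.eq_empty_or_nonempty with h | hne
  · simp [h]
  · have hBpos : 0 < ∑ k ∈ t, b k :=
      Finset.sum_pos (fun k hk => (Finset.mem_filter.mp hk).2) hne
    have hJ := Real.convexOn_mul_log.map_centerMass_le
      (t := t) (w := b) (p := fun k => a k / b k)
      (fun k hk => ((Finset.mem_filter.mp hk).2).le) hBpos
      (fun k hk => Set.mem_Ici.mpr (div_nonneg (ha k (Finset.mem_filter.mp hk).1)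
        ((Finset.mem_filter.mp hk).2).le))
    simp only [Finset.centerMass, smul_eq_mul, Function.comp] at hJ
    have h1 : ∑ k ∈ t, b k * (a k / b k) = ∑ k ∈ t, a k :=
      Finset.sum_congr rfl fun k hk => by
        rw [mul_comm, div_mul_cancel₀ _ ((Finset.mem_filter.mp hk).2).ne']
    have h2 : ∑ k ∈ t, b k * (a k / b k * Real.log (a k / b k)) =
        ∑ k ∈ t, a k * Real.log (a k / b k) :=
      Finset.sum_congr rfl fun k hk => by
        rw [← mul_assoc, mul_comm (b k), div_mul_cancel₀ _ ((Finset.mem_filter.mp hk).2).ne']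
    rw [h1, h2] at hJ
    have hJ' := mul_le_mul_of_nonneg_left hJ hBpos.le
    calc (∑ k ∈ t, a k) * Real.log ((∑ k ∈ t, a k) / (∑ k ∈ t, b k))
        = (∑ k ∈ t, b k) * ((∑ k ∈ t, b k)⁻¹ * (∑ k ∈ t, a k) *
            Real.log ((∑ k ∈ t, b k)⁻¹ * (∑ k ∈ t, a k))) := by
          rw [inv_mul_eq_div]; field_simp
      _ ≤ (∑ k ∈ t, b k) * ((∑ k ∈ t, b k)⁻¹ * ∑ k ∈ t, a k * Real.log (a k / b k)) := hJ'
      _ = ∑ k ∈ t, a k * Real.log (a k / b k) := by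
          rw [← mul_assoc, mul_inv_cancel₀ hBpos.ne', one_mul]

lemma jensen_psi {ι : Type*} [DecidableEq ι] (s : Finset ι) (w A B : ι → ℝ)
    (hw : ∀ k ∈ s, 0 ≤ w k) (hw1 : ∑ k ∈ s, w k = 1)
    (hA : ∀ k ∈ s, 0 < A k) (hB : ∀ k ∈ s, 0 < B k) :
    ((∑ k ∈ s, w k * A k) - (∑ k ∈ s, w k * B k)) *
      (Real.log (∑ k ∈ s, w k * A k) - Real.log (∑ k ∈ s, w k * B k)) ≤
      ∑ k ∈ s, w k * ((A k - B k) * (Real.log (A k) - Real.log (B k))) := by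
  classical
  obtain ⟨k0, hk0s, hk0⟩ : ∃ k ∈ s, 0 < w k := by
    by_contra h
    push_neg at h
    have : ∑ k ∈ s, w k ≤ 0 := Finset.sum_nonpos fun k hk => h k hk
    linarith
  have hAbar : 0 < ∑ k ∈ s, w k * A k :=
    Finset.sum_pos' (fun k hk => mul_nonneg (hw k hk) (hA k hk).le)
      ⟨k0, hk0s, mul_pos hk0 (hA k0 hk0s)⟩
  have hBbar : 0 < ∑ k ∈ s, w k * B k :=
    Finset.sum_pos' (fun k hk => mul_nonneg (hw k hk) (hB k hk).le)
      ⟨k0, hk0s, mul_pos hk0 (hB k0 hk0s)⟩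
  have key : ∀ (U V : ι → ℝ), (∀ k ∈ s, 0 < U k) → (∀ k ∈ s, 0 < V k) →
      (∑ k ∈ s, w k * U k) * Real.log ((∑ k ∈ s, w k * U k) / (∑ k ∈ s, w k * V k)) ≤
        ∑ k ∈ s, w k * (U k * Real.log (U k / V k)) := by
    intro U V hU hV
    have h := mylog_sum s (fun k => w k * U k) (fun k => w k * V k)
      (fun k hk => mul_nonneg (hw k hk) (hU k hk).le)
      (fun k hk => mul_nonneg (hw k hk) (hV k hk).le)
      (fun k hk h0 => by
        have : w k = 0 := by
          rcases mul_eq_zero.mp h0 with h | h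
          · exact h
          · exact absurd h (hV k hk).ne'
        simp [this])
    refine h.trans_eq (Finset.sum_congr rfl fun k hk => ?_)
    rcases eq_or_ne (w k) 0 with h0 | h0
    · simp [h0]
    · rw [mul_div_mul_left _ _ h0, mul_assoc]
  have h1 := key A B hA hB
  have h2 := key B A hB hA
  have e1 : Real.log ((∑ k ∈ s, w k * A k) / (∑ k ∈ s, w k * B k)) =
      Real.log (∑ k ∈ s, w k * A k) - Real.log (∑ k ∈ s, w k * B k) :=
    Real.log_div hAbar.ne' hBbar.ne'
  have e2 : Real.log ((∑ k ∈ s, w k * B k) / (∑ k ∈ s, w k * A k)) =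
      Real.log (∑ k ∈ s, w k * B k) - Real.log (∑ k ∈ s, w k * A k) :=
    Real.log_div hBbar.ne' hAbar.ne'
  rw [e1] at h1; rw [e2] at h2
  have e3 : ∑ k ∈ s, w k * ((A k - B k) * (Real.log (A k) - Real.log (B k))) =
      (∑ k ∈ s, w k * (A k * Real.log (A k / B k))) +
      (∑ k ∈ s, w k * (B k * Real.log (B k / A k))) := by
    rw [← Finset.sum_add_distrib]
    refine Finset.sum_congr rfl fun k hk => ?_
    rw [Real.log_div (hA k hk).ne' (hB k hk).ne', Real.log_div (hB k hk).ne' (hA k hk).ne']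
    ring
  rw [e3]
  nlinarith [h1, h2]

lemma ent_nonneg {ι : Type*} [DecidableEq ι] (s : Finset ι) (μ f : ι → ℝ)
    (hμ : ∀ k ∈ s, 0 ≤ μ k) (hμ1 : ∑ k ∈ s, μ k = 1) (hf : ∀ k ∈ s, 0 < f k) :
    (∑ k ∈ s, μ k * f k) * Real.log (∑ k ∈ s, μ k * f k) ≤
      ∑ k ∈ s, μ k * (f k * Real.log (f k)) := by
  have h := mylog_sum s (fun k => μ k * f k) μ
    (fun k hk => mul_nonneg (hμ k hk) (hf k hk).le) hμ
    (fun k hk h0 => by simp [h0])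
  rw [hμ1, div_one] at h
  refine h.trans_eq (Finset.sum_congr rfl fun k hk => ?_)
  rcases eq_or_ne (μ k) 0 with h0 | h0
  · simp [h0]
  · simp only [mul_div_cancel_left₀ _ h0]; ring


/-- fuzzy decomposition bound for the modified log-Sobolev constant:
α(Q) ≥ min{χ α(Q̂), min_i α(Q_i)}. -/
theorem fuzzy_decomposition_mlsi
    {Ω I : Type*} [Fintype Ω] [Fintype I] [DecidableEq Ω] [DecidableEq I] [Nonempty I]
    (π : Ω → ℝ) (Q : Ω → Ω → ℝ) (a : Ω → I → ℝ)
    (hπ0 : ∀ x, 0 ≤ π x) (hπ1 : ∑ x, π x = 1)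
    (hQnn : ∀ x y, x ≠ y → 0 ≤ Q x y)
    (hrev : ∀ x y, π x * Q x y = π y * Q y x)
    (ha0 : ∀ x i, 0 ≤ a x i) (ha1 : ∀ x i, a x i ≤ 1)
    (hasum : ∀ x, ∑ i, a x i = 1)
    (πhat : I → ℝ) (hπhat : ∀ i, πhat i = ∑ x, a x i * π x)
    (hπhatpos : ∀ i, 0 < πhat i)
    (πi : I → Ω → ℝ) (hπi : ∀ i x, πi i x = a x i * π x / πhat i)
    (Qhat : I → I → ℝ)
    (hQhat : ∀ i j, i ≠ j → Qhat i j = (1 / πhat i) *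
      ∑ x, ∑ y ∈ Finset.univ.erase x, a x i * a y j * π x * Q x y)
    -- couplings κ_{ij} of π_i and π_j, for pairs with Q̂(i,j) > 0
    (κ : I → I → Ω → Ω → ℝ)
    (hκ0 : ∀ i j x y, 0 ≤ κ i j x y)
    (hκsupp : ∀ i j, 0 < Qhat i j → ∀ x y, κ i j x y ≠ 0 → 0 < a x i ∧ 0 < a y j)
    (hκmargi : ∀ i j, 0 < Qhat i j → ∀ x, ∑ y, κ i j x y = πi i x)
    (hκmargj : ∀ i j, 0 < Qhat i j → ∀ y, ∑ x, κ i j x y = πi j y)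
    -- quality χ of the couplings
    (χ : ℝ) (hχ0 : 0 ≤ χ)
    (hχ : ∀ i j, 0 < Qhat i j → ∀ x y, x ≠ y → 0 < κ i j x y →
      χ * (πhat i * Qhat i j * κ i j x y) ≤ a x i * a y j * π x * Q x y)
    -- α̂ is a valid modified log-Sobolev constant for the projection chain (Q̂, π̂)
    (alphahat : ℝ)
    (hproj : ∀ g : I → ℝ, (∀ i, 0 < g i) →
      (1 / 2) * ∑ i, ∑ j ∈ Finset.univ.erase i, πhat i * Qhat i j * ((g i - g j) * (Real.log (g i) - Real.log (g j))) ≥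
        alphahat * ((∑ i, πhat i * (g i * Real.log (g i))) - (∑ i, πhat i * g i) * Real.log (∑ i, πhat i * g i)))
    -- α_i is a valid modified log-Sobolev constant for each restriction chain (Q_i, π_i)
    (alpha : I → ℝ)
    (hres : ∀ i, ∀ f : Ω → ℝ, (∀ x, 0 < f x) →
      (1 / 2) * ∑ x ∈ Finset.univ.filter (fun x => 0 < a x i),
          ∑ y ∈ (Finset.univ.filter (fun y => 0 < a y i)).erase x,
            πi i x * (a y i * Q x y) * ((f x - f y) * (Real.log (f x) - Real.log (f y))) ≥
        alpha i * ((∑ x ∈ Finset.univ.filter (fun x => 0 < a x i), πi i x * (f x * Real.log (f x))) -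
          (∑ x ∈ Finset.univ.filter (fun x => 0 < a x i), πi i x * f x) *
            Real.log (∑ x ∈ Finset.univ.filter (fun x => 0 < a x i), πi i x * f x))) :
    -- conclusion: min{χ α̂, min_i α_i} is a valid modified log-Sobolev constant for (Q, π)
    ∀ f : Ω → ℝ, (∀ x, 0 < f x) →
      (1 / 2) * ∑ x, ∑ y ∈ Finset.univ.erase x, π x * Q x y * ((f x - f y) * (Real.log (f x) - Real.log (f y))) ≥
        min (χ * alphahat) (Finset.univ.inf' Finset.univ_nonempty alpha) *
          ((∑ x, π x * (f x * Real.log (f x))) - (∑ x, π x * f x) * Real.log (∑ x, π x * f x)) := by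
  
  intro f hf
  classical
  have hπhatne : ∀ i, πhat i ≠ 0 := fun i => (hπhatpos i).ne'
  have hπinn : ∀ i x, 0 ≤ πi i x := by
    intro i x
    rw [hπi]
    exact div_nonneg (mul_nonneg (ha0 x i) (hπ0 x)) (hπhatpos i).le
  have hkey : ∀ i x, πhat i * πi i x = a x i * π x := by
    intro i x
    rw [hπi, mul_comm, div_mul_cancel₀ _ (hπhatne i)]
  have hπisum : ∀ i, ∑ x, πi i x = 1 := by
    intro i
    have h : ∑ x, πi i x = (∑ x, a x i * π x) / πhat i := by
      simp only [hπi]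
      rw [← Finset.sum_div]
    rw [h, ← hπhat, div_self (hπhatne i)]
  have hπhat1 : ∑ i, πhat i = 1 := by
    have h : ∑ i, πhat i = ∑ x, (∑ i : I, a x i) * π x := by
      simp only [hπhat]
      rw [Finset.sum_comm]
      exact Finset.sum_congr rfl fun x _ => (Finset.sum_mul _ _ _).symm
    rw [h]
    simp only [hasum, one_mul]
    exact hπ1
  set g : I → ℝ := fun i => ∑ x, πi i x * f x with hgdef
  have hgi : ∀ i, g i = ∑ x, πi i x * f x := fun i => rfl
  have hgpos : ∀ i, 0 < g i := by
    intro i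
    obtain ⟨x, -, hx⟩ : ∃ x ∈ Finset.univ, (0:ℝ) < πi i x := by
      apply Finset.exists_lt_of_sum_lt
      rw [hπisum i]
      simp
    rw [hgi]
    exact Finset.sum_pos' (fun y _ => mul_nonneg (hπinn i y) (hf y).le)
      ⟨x, Finset.mem_univ x, mul_pos hx (hf x)⟩
  have hlift : ∀ h : Ω → ℝ, ∑ i, πhat i * ∑ x, πi i x * h x = ∑ x, π x * h x := by
    intro h
    calc ∑ i, πhat i * ∑ x, πi i x * h x
        = ∑ i, ∑ x, (πhat i * πi i x) * h x := by
          refine Finset.sum_congr rfl fun i _ => ?_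
          rw [Finset.mul_sum]
          exact Finset.sum_congr rfl fun x _ => (mul_assoc _ _ _).symm
      _ = ∑ x, ∑ i, a x i * (π x * h x) := by
          rw [Finset.sum_comm]
          refine Finset.sum_congr rfl fun x _ => Finset.sum_congr rfl fun i _ => ?_
          rw [hkey]; ring
      _ = ∑ x, π x * h x := by
          refine Finset.sum_congr rfl fun x _ => ?_
          rw [← Finset.sum_mul, hasum, one_mul]
  have hEnti_nonneg : ∀ i,
      0 ≤ (∑ x, πi i x * (f x * Real.log (f x))) - g i * Real.log (g i) := by
    intro i
    have h := ent_nonneg Finset.univ (πi i) f (fun x _ => hπinn i x) (hπisum i)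
      (fun x _ => hf x)
    rw [hgi]
    linarith
  have hEnthat_nonneg : 0 ≤ (∑ i, πhat i * (g i * Real.log (g i))) -
      (∑ i, πhat i * g i) * Real.log (∑ i, πhat i * g i) :=
    sub_nonneg.mpr (ent_nonneg Finset.univ πhat g (fun i _ => (hπhatpos i).le) hπhat1
      (fun i _ => hgpos i))
  have hEntdecomp : (∑ x, π x * (f x * Real.log (f x))) -
      (∑ x, π x * f x) * Real.log (∑ x, π x * f x) =
      (∑ i, πhat i * ((∑ x, πi i x * (f x * Real.log (f x))) - g i * Real.log (g i))) +
      ((∑ i, πhat i * (g i * Real.log (g i))) -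
        (∑ i, πhat i * g i) * Real.log (∑ i, πhat i * g i)) := by
    have h1 := hlift (fun x => f x * Real.log (f x))
    have h2 := hlift f
    have h3 : ∑ i, πhat i * g i = ∑ x, π x * f x := h2
    have h4 : ∑ i, πhat i * ((∑ x, πi i x * (f x * Real.log (f x))) - g i * Real.log (g i)) =
        (∑ i, πhat i * (∑ x, πi i x * (f x * Real.log (f x)))) -
        ∑ i, πhat i * (g i * Real.log (g i)) := by
      rw [← Finset.sum_sub_distrib]
      exact Finset.sum_congr rfl fun i _ => by ring
    rw [h4, h1, h3]
    ring
  set E : Ω → Ω → ℝ := fun x y => (f x - f y) * (Real.log (f x) - Real.log (f y)) with hEdef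
  have hEapp : ∀ x y, (f x - f y) * (Real.log (f x) - Real.log (f y)) = E x y :=
    fun x y => rfl
  have hEnn : ∀ x y, 0 ≤ E x y := fun x y => psi_nonneg (hf x) (hf y)
  have hTnn : ∀ i j x y, y ≠ x → 0 ≤ a x i * a y j * π x * Q x y * E x y := by
    intro i j x y hyx
    exact mul_nonneg (mul_nonneg (mul_nonneg (mul_nonneg (ha0 x i) (ha0 y j)) (hπ0 x))
      (hQnn x y (Ne.symm hyx))) (hEnn x y)
  -- splitting of the Dirichlet form
  have hpt : ∀ x y, π x * Q x y * E x y =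
      (∑ i, a x i * a y i * π x * Q x y * E x y) +
      ∑ i, ∑ j ∈ Finset.univ.erase i, a x i * a y j * π x * Q x y * E x y := by
    intro x y
    have h2 : ∑ i, ∑ j, a x i * a y j * π x * Q x y * E x y = π x * Q x y * E x y := by
      have hinner : ∀ i : I, ∑ j, a x i * a y j * π x * Q x y * E x y
          = a x i * (π x * Q x y * E x y) := by
        intro i
        calc ∑ j, a x i * a y j * π x * Q x y * E x y
            = ∑ j, a y j * (a x i * (π x * Q x y * E x y)) :=
              Finset.sum_congr rfl fun j _ => by ring
          _ = (∑ j, a y j) * (a x i * (π x * Q x y * E x y)) := by rw [Finset.sum_mul]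
          _ = a x i * (π x * Q x y * E x y) := by rw [hasum, one_mul]
      calc ∑ i, ∑ j, a x i * a y j * π x * Q x y * E x y
          = ∑ i, a x i * (π x * Q x y * E x y) := Finset.sum_congr rfl fun i _ => hinner i
        _ = (∑ i, a x i) * (π x * Q x y * E x y) := by rw [Finset.sum_mul]
        _ = π x * Q x y * E x y := by rw [hasum, one_mul]
    rw [← h2]
    rw [show (∑ i, ∑ j, a x i * a y j * π x * Q x y * E x y) =
        ∑ i, (a x i * a y i * π x * Q x y * E x y +
          ∑ j ∈ Finset.univ.erase i, a x i * a y j * π x * Q x y * E x y) from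
      Finset.sum_congr rfl fun i _ => (Finset.add_sum_erase _ _ (Finset.mem_univ i)).symm]
    rw [Finset.sum_add_distrib]
  have hswap1 : ∑ x, ∑ y ∈ Finset.univ.erase x, ∑ i : I, a x i * a y i * π x * Q x y * E x y
      = ∑ i, ∑ x, ∑ y ∈ Finset.univ.erase x, a x i * a y i * π x * Q x y * E x y := by
    calc ∑ x, ∑ y ∈ Finset.univ.erase x, ∑ i : I, a x i * a y i * π x * Q x y * E x y
        = ∑ x, ∑ i : I, ∑ y ∈ Finset.univ.erase x, a x i * a y i * π x * Q x y * E x y :=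
          Finset.sum_congr rfl fun x _ => Finset.sum_comm
      _ = ∑ i, ∑ x, ∑ y ∈ Finset.univ.erase x, a x i * a y i * π x * Q x y * E x y :=
          Finset.sum_comm
  have hswap2 : ∑ x, ∑ y ∈ Finset.univ.erase x, ∑ i : I, ∑ j ∈ Finset.univ.erase i,
        a x i * a y j * π x * Q x y * E x y
      = ∑ i, ∑ j ∈ Finset.univ.erase i, ∑ x, ∑ y ∈ Finset.univ.erase x,
        a x i * a y j * π x * Q x y * E x y := by
    calc ∑ x, ∑ y ∈ Finset.univ.erase x, ∑ i : I, ∑ j ∈ Finset.univ.erase i,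
          a x i * a y j * π x * Q x y * E x y
        = ∑ x, ∑ i : I, ∑ y ∈ Finset.univ.erase x, ∑ j ∈ Finset.univ.erase i,
          a x i * a y j * π x * Q x y * E x y :=
          Finset.sum_congr rfl fun x _ => Finset.sum_comm
      _ = ∑ x, ∑ i : I, ∑ j ∈ Finset.univ.erase i, ∑ y ∈ Finset.univ.erase x,
          a x i * a y j * π x * Q x y * E x y :=
          Finset.sum_congr rfl fun x _ => Finset.sum_congr rfl fun i _ => Finset.sum_comm
      _ = ∑ i, ∑ x, ∑ j ∈ Finset.univ.erase i, ∑ y ∈ Finset.univ.erase x,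
          a x i * a y j * π x * Q x y * E x y := Finset.sum_comm
      _ = ∑ i, ∑ j ∈ Finset.univ.erase i, ∑ x, ∑ y ∈ Finset.univ.erase x,
          a x i * a y j * π x * Q x y * E x y :=
          Finset.sum_congr rfl fun i _ => Finset.sum_comm
  have hsplit : ∑ x, ∑ y ∈ Finset.univ.erase x, π x * Q x y * E x y =
      (∑ i, ∑ x, ∑ y ∈ Finset.univ.erase x, a x i * a y i * π x * Q x y * E x y) +
      (∑ i, ∑ j ∈ Finset.univ.erase i, ∑ x, ∑ y ∈ Finset.univ.erase x,
        a x i * a y j * π x * Q x y * E x y) := by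
    rw [← hswap1, ← hswap2, ← Finset.sum_add_distrib]
    refine Finset.sum_congr rfl fun x _ => ?_
    rw [← Finset.sum_add_distrib]
    exact Finset.sum_congr rfl fun y _ => hpt x y
  -- restriction part
  have hzeroa : ∀ i x, ¬ (0 < a x i) → a x i = 0 := fun i x hx =>
    le_antisymm (not_lt.mp hx) (ha0 x i)
  have hπizero : ∀ i x, ¬ (0 < a x i) → πi i x = 0 := by
    intro i x hx
    rw [hπi, hzeroa i x hx]
    simp
  have hresfull : ∀ i,
      alpha i * ((∑ x, πi i x * (f x * Real.log (f x))) - g i * Real.log (g i)) ≤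
      (1/2) * ∑ x, ∑ y ∈ Finset.univ.erase x, πi i x * (a y i * Q x y) * E x y := by
    intro i
    have h := hres i f hf
    have hx1 : ∀ x, ∑ y ∈ (Finset.univ.filter (fun y => 0 < a y i)).erase x,
        πi i x * (a y i * Q x y) * E x y
        = ∑ y ∈ Finset.univ.erase x, πi i x * (a y i * Q x y) * E x y := by
      intro x
      apply Finset.sum_subset (Finset.erase_subset_erase x (Finset.filter_subset _ _))
      intro y hy hyn
      have hyx : y ≠ x := Finset.ne_of_mem_erase hy
      have hya : ¬ (0 < a y i) := fun hpos =>
        hyn (Finset.mem_erase.mpr ⟨hyx, Finset.mem_filter.mpr ⟨Finset.mem_univ y, hpos⟩⟩)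
      rw [hzeroa i y hya]
      ring
    have hD : ∑ x ∈ Finset.univ.filter (fun x => 0 < a x i),
        ∑ y ∈ (Finset.univ.filter (fun y => 0 < a y i)).erase x,
          πi i x * (a y i * Q x y) * E x y
        = ∑ x, ∑ y ∈ Finset.univ.erase x, πi i x * (a y i * Q x y) * E x y := by
      calc ∑ x ∈ Finset.univ.filter (fun x => 0 < a x i),
          ∑ y ∈ (Finset.univ.filter (fun y => 0 < a y i)).erase x,
            πi i x * (a y i * Q x y) * E x y
          = ∑ x ∈ Finset.univ.filter (fun x => 0 < a x i),
            ∑ y ∈ Finset.univ.erase x, πi i x * (a y i * Q x y) * E x y :=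
            Finset.sum_congr rfl fun x _ => hx1 x
        _ = ∑ x, ∑ y ∈ Finset.univ.erase x, πi i x * (a y i * Q x y) * E x y := by
            apply Finset.sum_subset (Finset.filter_subset _ _)
            intro x _ hxn
            have h0 : πi i x = 0 := hπizero i x (fun hpos =>
              hxn (Finset.mem_filter.mpr ⟨Finset.mem_univ x, hpos⟩))
            refine Finset.sum_eq_zero fun y _ => ?_
            rw [h0]; ring
    have hent1 : ∑ x ∈ Finset.univ.filter (fun x => 0 < a x i), πi i x * (f x * Real.log (f x))
        = ∑ x, πi i x * (f x * Real.log (f x)) := by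
      apply Finset.sum_subset (Finset.filter_subset _ _)
      intro x _ hxn
      rw [hπizero i x (fun hpos => hxn (Finset.mem_filter.mpr ⟨Finset.mem_univ x, hpos⟩))]
      ring
    have hent2 : ∑ x ∈ Finset.univ.filter (fun x => 0 < a x i), πi i x * f x = g i := by
      rw [hgi]
      apply Finset.sum_subset (Finset.filter_subset _ _)
      intro x _ hxn
      rw [hπizero i x (fun hpos => hxn (Finset.mem_filter.mpr ⟨Finset.mem_univ x, hpos⟩))]
      ring
    rw [ge_iff_le, hD, hent1, hent2] at h
    exact h
  have hαmin2 : ∀ i, min (χ * alphahat) (Finset.univ.inf' Finset.univ_nonempty alpha) ≤ alpha i :=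
    fun i => (min_le_right _ _).trans (Finset.inf'_le _ (Finset.mem_univ i))
  have hres2 : ∀ i, πhat i *
      (min (χ * alphahat) (Finset.univ.inf' Finset.univ_nonempty alpha) *
        ((∑ x, πi i x * (f x * Real.log (f x))) - g i * Real.log (g i)))
      ≤ (1/2) * ∑ x, ∑ y ∈ Finset.univ.erase x, a x i * a y i * π x * Q x y * E x y := by
    intro i
    have hstep1 : min (χ * alphahat) (Finset.univ.inf' Finset.univ_nonempty alpha) *
        ((∑ x, πi i x * (f x * Real.log (f x))) - g i * Real.log (g i)) ≤
        alpha i * ((∑ x, πi i x * (f x * Real.log (f x))) - g i * Real.log (g i)) :=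
      mul_le_mul_of_nonneg_right (hαmin2 i) (hEnti_nonneg i)
    have h := mul_le_mul_of_nonneg_left (hstep1.trans (hresfull i)) (hπhatpos i).le
    have heq : πhat i * ((1/2) * ∑ x, ∑ y ∈ Finset.univ.erase x,
          πi i x * (a y i * Q x y) * E x y)
        = (1/2) * ∑ x, ∑ y ∈ Finset.univ.erase x, a x i * a y i * π x * Q x y * E x y := by
      rw [← mul_assoc, mul_comm (πhat i) ((1:ℝ)/2), mul_assoc, Finset.mul_sum]
      congr 1
      refine Finset.sum_congr rfl fun x _ => ?_
      rw [Finset.mul_sum]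
      refine Finset.sum_congr rfl fun y _ => ?_
      calc πhat i * (πi i x * (a y i * Q x y) * E x y)
          = (πhat i * πi i x) * ((a y i * Q x y) * E x y) := by ring
        _ = (a x i * π x) * ((a y i * Q x y) * E x y) := by rw [hkey]
        _ = a x i * a y i * π x * Q x y * E x y := by ring
    rw [heq] at h
    exact h
  -- cross part
  have hQhatnn : ∀ i j, i ≠ j → 0 ≤ Qhat i j := by
    intro i j hij
    rw [hQhat i j hij]
    apply mul_nonneg (one_div_nonneg.mpr (hπhatpos i).le)
    apply Finset.sum_nonneg
    intro x _
    apply Finset.sum_nonneg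
    intro y hy
    exact mul_nonneg (mul_nonneg (mul_nonneg (ha0 x i) (ha0 y j)) (hπ0 x))
      (hQnn x y (Ne.symm (Finset.ne_of_mem_erase hy)))
  have hcross : ∀ i, ∀ j ∈ Finset.univ.erase i,
      χ * (πhat i * Qhat i j * ((g i - g j) * (Real.log (g i) - Real.log (g j))))
      ≤ ∑ x, ∑ y ∈ Finset.univ.erase x, a x i * a y j * π x * Q x y * E x y := by
    intro i j hj
    have hij : i ≠ j := (Finset.ne_of_mem_erase hj).symm
    have hDnn : 0 ≤ ∑ x, ∑ y ∈ Finset.univ.erase x, a x i * a y j * π x * Q x y * E x y :=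
      Finset.sum_nonneg fun x _ => Finset.sum_nonneg fun y hy =>
        hTnn i j x y (Finset.ne_of_mem_erase hy)
    rcases (hQhatnn i j hij).eq_or_lt with hzero | hpos
    · rw [← hzero]
      simpa using hDnn
    · have hκ1 : ∑ p : Ω × Ω, κ i j p.1 p.2 = 1 := by
        rw [Fintype.sum_prod_type]
        calc ∑ x, ∑ y, κ i j x y = ∑ x, πi i x :=
            Finset.sum_congr rfl fun x _ => hκmargi i j hpos x
          _ = 1 := hπisum i
      have hgieq : ∑ p : Ω × Ω, κ i j p.1 p.2 * f p.1 = g i := by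
        rw [Fintype.sum_prod_type]
        calc ∑ x, ∑ y, κ i j x y * f x = ∑ x, (∑ y, κ i j x y) * f x :=
            Finset.sum_congr rfl fun x _ => (Finset.sum_mul _ _ _).symm
          _ = ∑ x, πi i x * f x :=
            Finset.sum_congr rfl fun x _ => by rw [hκmargi i j hpos x]
          _ = g i := (hgi i).symm
      have hgjeq : ∑ p : Ω × Ω, κ i j p.1 p.2 * f p.2 = g j := by
        rw [Fintype.sum_prod_type]
        calc ∑ x, ∑ y, κ i j x y * f y = ∑ y, ∑ x, κ i j x y * f y := Finset.sum_comm
          _ = ∑ y, (∑ x, κ i j x y) * f y :=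
            Finset.sum_congr rfl fun y _ => (Finset.sum_mul _ _ _).symm
          _ = ∑ y, πi j y * f y :=
            Finset.sum_congr rfl fun y _ => by rw [hκmargj i j hpos y]
          _ = g j := (hgi j).symm
      have hJ := jensen_psi (Finset.univ : Finset (Ω × Ω)) (fun p => κ i j p.1 p.2)
        (fun p => f p.1) (fun p => f p.2) (fun p _ => hκ0 i j p.1 p.2) hκ1
        (fun p _ => hf p.1) (fun p _ => hf p.2)
      rw [hgieq, hgjeq] at hJ
      have hcnn : 0 ≤ χ * (πhat i * Qhat i j) :=
        mul_nonneg hχ0 (mul_nonneg (hπhatpos i).le hpos.le)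
      have hJ2 := mul_le_mul_of_nonneg_left hJ hcnn
      have hexp : χ * (πhat i * Qhat i j) * (∑ p : Ω × Ω, κ i j p.1 p.2 *
            ((f p.1 - f p.2) * (Real.log (f p.1) - Real.log (f p.2))))
          = ∑ x, ∑ y, χ * (πhat i * Qhat i j) * (κ i j x y *
            ((f x - f y) * (Real.log (f x) - Real.log (f y)))) := by
        rw [Finset.mul_sum, Fintype.sum_prod_type]
      have hlast : ∑ x, ∑ y, χ * (πhat i * Qhat i j) * (κ i j x y *
            ((f x - f y) * (Real.log (f x) - Real.log (f y))))
          ≤ ∑ x, ∑ y ∈ Finset.univ.erase x, a x i * a y j * π x * Q x y * E x y := by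
        refine Finset.sum_le_sum fun x _ => ?_
        rw [← Finset.add_sum_erase _ _ (Finset.mem_univ x)]
        have hdiag : χ * (πhat i * Qhat i j) * (κ i j x x *
            ((f x - f x) * (Real.log (f x) - Real.log (f x)))) = 0 := by simp
        rw [hdiag, zero_add]
        refine Finset.sum_le_sum fun y hy => ?_
        have hxy : x ≠ y := (Finset.ne_of_mem_erase hy).symm
        rcases (hκ0 i j x y).eq_or_lt with hk0 | hkpos
        · rw [← hk0]
          simpa using hTnn i j x y (Finset.ne_of_mem_erase hy)
        · have h1 := hχ i j hpos x y hxy hkpos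
          have h2 := mul_le_mul_of_nonneg_right h1 (hEnn x y)
          calc χ * (πhat i * Qhat i j) * (κ i j x y *
              ((f x - f y) * (Real.log (f x) - Real.log (f y))))
              = (χ * (πhat i * Qhat i j * κ i j x y)) * E x y := by
                rw [← hEapp]; ring
            _ ≤ (a x i * a y j * π x * Q x y) * E x y := h2
            _ = a x i * a y j * π x * Q x y * E x y := by ring
      calc χ * (πhat i * Qhat i j * ((g i - g j) * (Real.log (g i) - Real.log (g j))))
          = χ * (πhat i * Qhat i j) *
            ((g i - g j) * (Real.log (g i) - Real.log (g j))) := by ring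
        _ ≤ χ * (πhat i * Qhat i j) * (∑ p : Ω × Ω, κ i j p.1 p.2 *
            ((f p.1 - f p.2) * (Real.log (f p.1) - Real.log (f p.2)))) := hJ2
        _ = ∑ x, ∑ y, χ * (πhat i * Qhat i j) * (κ i j x y *
            ((f x - f y) * (Real.log (f x) - Real.log (f y)))) := hexp
        _ ≤ ∑ x, ∑ y ∈ Finset.univ.erase x, a x i * a y j * π x * Q x y * E x y := hlast
  -- assemble cross part
  have hprojg := hproj g hgpos
  have hCrossSum : min (χ * alphahat) (Finset.univ.inf' Finset.univ_nonempty alpha) *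
      ((∑ i, πhat i * (g i * Real.log (g i))) -
        (∑ i, πhat i * g i) * Real.log (∑ i, πhat i * g i))
      ≤ (1/2) * ∑ i, ∑ j ∈ Finset.univ.erase i, ∑ x, ∑ y ∈ Finset.univ.erase x,
        a x i * a y j * π x * Q x y * E x y := by
    have h := Finset.sum_le_sum (fun i (_ : i ∈ (Finset.univ : Finset I)) =>
      Finset.sum_le_sum (fun j hj => hcross i j hj))
    have e : χ * ∑ i, ∑ j ∈ Finset.univ.erase i,
          πhat i * Qhat i j * ((g i - g j) * (Real.log (g i) - Real.log (g j)))
        = ∑ i, ∑ j ∈ Finset.univ.erase i,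
          χ * (πhat i * Qhat i j * ((g i - g j) * (Real.log (g i) - Real.log (g j)))) := by
      rw [Finset.mul_sum]
      exact Finset.sum_congr rfl fun i _ => by rw [Finset.mul_sum]
    have hc1 : χ * (alphahat * ((∑ i, πhat i * (g i * Real.log (g i))) -
          (∑ i, πhat i * g i) * Real.log (∑ i, πhat i * g i)))
        ≤ χ * ((1/2) * ∑ i, ∑ j ∈ Finset.univ.erase i,
          πhat i * Qhat i j * ((g i - g j) * (Real.log (g i) - Real.log (g j)))) :=
      mul_le_mul_of_nonneg_left hprojg hχ0
    have hc2 : min (χ * alphahat) (Finset.univ.inf' Finset.univ_nonempty alpha) *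
        ((∑ i, πhat i * (g i * Real.log (g i))) -
          (∑ i, πhat i * g i) * Real.log (∑ i, πhat i * g i))
        ≤ (χ * alphahat) * ((∑ i, πhat i * (g i * Real.log (g i))) -
          (∑ i, πhat i * g i) * Real.log (∑ i, πhat i * g i)) :=
      mul_le_mul_of_nonneg_right (min_le_left _ _) hEnthat_nonneg
    have hc3 : χ * ((1/2) * ∑ i, ∑ j ∈ Finset.univ.erase i,
          πhat i * Qhat i j * ((g i - g j) * (Real.log (g i) - Real.log (g j))))
        ≤ (1/2) * ∑ i, ∑ j ∈ Finset.univ.erase i, ∑ x, ∑ y ∈ Finset.univ.erase x,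
          a x i * a y j * π x * Q x y * E x y := by
      calc χ * ((1/2) * ∑ i, ∑ j ∈ Finset.univ.erase i,
            πhat i * Qhat i j * ((g i - g j) * (Real.log (g i) - Real.log (g j))))
          = (1/2) * (χ * ∑ i, ∑ j ∈ Finset.univ.erase i,
            πhat i * Qhat i j * ((g i - g j) * (Real.log (g i) - Real.log (g j)))) := by ring
        _ = (1/2) * ∑ i, ∑ j ∈ Finset.univ.erase i,
            χ * (πhat i * Qhat i j * ((g i - g j) * (Real.log (g i) - Real.log (g j)))) := by
            rw [e]
        _ ≤ (1/2) * ∑ i, ∑ j ∈ Finset.univ.erase i, ∑ x, ∑ y ∈ Finset.univ.erase x,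
            a x i * a y j * π x * Q x y * E x y := by
            have := mul_le_mul_of_nonneg_left h (by norm_num : (0:ℝ) ≤ 1/2)
            exact this
    calc min (χ * alphahat) (Finset.univ.inf' Finset.univ_nonempty alpha) *
        ((∑ i, πhat i * (g i * Real.log (g i))) -
          (∑ i, πhat i * g i) * Real.log (∑ i, πhat i * g i))
        ≤ (χ * alphahat) * ((∑ i, πhat i * (g i * Real.log (g i))) -
          (∑ i, πhat i * g i) * Real.log (∑ i, πhat i * g i)) := hc2
      _ = χ * (alphahat * ((∑ i, πhat i * (g i * Real.log (g i))) -
          (∑ i, πhat i * g i) * Real.log (∑ i, πhat i * g i))) := by ring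
      _ ≤ χ * ((1/2) * ∑ i, ∑ j ∈ Finset.univ.erase i,
          πhat i * Qhat i j * ((g i - g j) * (Real.log (g i) - Real.log (g j)))) := hc1
      _ ≤ (1/2) * ∑ i, ∑ j ∈ Finset.univ.erase i, ∑ x, ∑ y ∈ Finset.univ.erase x,
          a x i * a y j * π x * Q x y * E x y := hc3
  -- assemble restriction part
  have hResSum : min (χ * alphahat) (Finset.univ.inf' Finset.univ_nonempty alpha) *
      (∑ i, πhat i * ((∑ x, πi i x * (f x * Real.log (f x))) - g i * Real.log (g i)))
      ≤ (1/2) * ∑ i, ∑ x, ∑ y ∈ Finset.univ.erase x,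
        a x i * a y i * π x * Q x y * E x y := by
    calc min (χ * alphahat) (Finset.univ.inf' Finset.univ_nonempty alpha) *
        (∑ i, πhat i * ((∑ x, πi i x * (f x * Real.log (f x))) - g i * Real.log (g i)))
        = ∑ i, πhat i *
          (min (χ * alphahat) (Finset.univ.inf' Finset.univ_nonempty alpha) *
            ((∑ x, πi i x * (f x * Real.log (f x))) - g i * Real.log (g i))) := by
          rw [Finset.mul_sum]
          exact Finset.sum_congr rfl fun i _ => by ring
      _ ≤ ∑ i, (1/2) * ∑ x, ∑ y ∈ Finset.univ.erase x,
            a x i * a y i * π x * Q x y * E x y :=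
          Finset.sum_le_sum fun i _ => hres2 i
      _ = (1/2) * ∑ i, ∑ x, ∑ y ∈ Finset.univ.erase x,
            a x i * a y i * π x * Q x y * E x y := by rw [Finset.mul_sum]
  -- final assembly
  rw [ge_iff_le]
  have hgoalE : ∑ x, ∑ y ∈ Finset.univ.erase x,
      π x * Q x y * ((f x - f y) * (Real.log (f x) - Real.log (f y)))
      = ∑ x, ∑ y ∈ Finset.univ.erase x, π x * Q x y * E x y :=
    Finset.sum_congr rfl fun x _ => Finset.sum_congr rfl fun y _ => by rw [hEapp]
  rw [hgoalE, hEntdecomp, hsplit]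
  calc min (χ * alphahat) (Finset.univ.inf' Finset.univ_nonempty alpha) *
      ((∑ i, πhat i * ((∑ x, πi i x * (f x * Real.log (f x))) - g i * Real.log (g i))) +
        ((∑ i, πhat i * (g i * Real.log (g i))) -
          (∑ i, πhat i * g i) * Real.log (∑ i, πhat i * g i)))
      = min (χ * alphahat) (Finset.univ.inf' Finset.univ_nonempty alpha) *
        (∑ i, πhat i * ((∑ x, πi i x * (f x * Real.log (f x))) - g i * Real.log (g i))) +
        min (χ * alphahat) (Finset.univ.inf' Finset.univ_nonempty alpha) *
        ((∑ i, πhat i * (g i * Real.log (g i))) -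
          (∑ i, πhat i * g i) * Real.log (∑ i, πhat i * g i)) := by ring
    _ ≤ (1/2) * (∑ i, ∑ x, ∑ y ∈ Finset.univ.erase x,
          a x i * a y i * π x * Q x y * E x y) +
        (1/2) * (∑ i, ∑ j ∈ Finset.univ.erase i, ∑ x, ∑ y ∈ Finset.univ.erase x,
          a x i * a y j * π x * Q x y * E x y) := add_le_add hResSum hCrossSum
    _ = (1/2) * ((∑ i, ∑ x, ∑ y ∈ Finset.univ.erase x,
          a x i * a y i * π x * Q x y * E x y) +
        (∑ i, ∑ j ∈ Finset.univ.erase i, ∑ x, ∑ y ∈ Finset.univ.erase x,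
          a x i * a y j * π x * Q x y * E x y)) := by ring
end

section
/- Fuzzy decomposition bound for the log-Sobolev constant: ρ(Q) ≥ min{ χ·ρ(Q̂), min_{i∈I} ρ(Q_i) }, where ρ(R) is the largest constant ρ such that E_R(√f, √f) ≥ ρ Ent(f) for all f > 0. -/
open Finset


lemma ent_nonneg' {α : Type*} [Fintype α] (p h : α → ℝ) (hp : ∀ x, 0 ≤ p x)
    (hp1 : ∑ x, p x = 1) (hh : ∀ x, 0 < h x) :
    (∑ x, p x * h x) * Real.log (∑ x, p x * h x) ≤ ∑ x, p x * (h x * Real.log (h x)) := by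
  have := Real.convexOn_mul_log.map_sum_le (t := Finset.univ) (w := p) (p := h)
    (fun i _ => hp i) hp1 (fun i _ => Set.mem_Ici.mpr (hh i).le)
  simpa [smul_eq_mul] using this

lemma coupling_sqrt_bound {Ω : Type*} [Fintype Ω] (k : Ω → Ω → ℝ) (f : Ω → ℝ)
    (hk : ∀ x y, 0 ≤ k x y) (hf : ∀ x, 0 < f x) :
    (Real.sqrt (∑ x, ∑ y, k x y * f x) - Real.sqrt (∑ x, ∑ y, k x y * f y)) ^ 2 ≤
      ∑ x, ∑ y, k x y * (Real.sqrt (f x) - Real.sqrt (f y)) ^ 2 := by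
  set A := ∑ x, ∑ y, k x y * f x with hA
  set B := ∑ x, ∑ y, k x y * f y with hB
  set C := ∑ x, ∑ y, k x y * (Real.sqrt (f x) * Real.sqrt (f y)) with hC
  have hA0 : 0 ≤ A := sum_nonneg fun x _ => sum_nonneg fun y _ => mul_nonneg (hk x y) (hf x).le
  have hB0 : 0 ≤ B := sum_nonneg fun x _ => sum_nonneg fun y _ => mul_nonneg (hk x y) (hf y).le
  have hC0 : 0 ≤ C := sum_nonneg fun x _ => sum_nonneg fun y _ => mul_nonneg (hk x y)
    (mul_nonneg (Real.sqrt_nonneg _) (Real.sqrt_nonneg _))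
  have hCS : C ^ 2 ≤ A * B := by
    have h := Finset.sum_sq_le_sum_mul_sum_of_sq_eq_mul (Finset.univ : Finset (Ω × Ω))
      (r := fun p => k p.1 p.2 * (Real.sqrt (f p.1) * Real.sqrt (f p.2)))
      (f := fun p => k p.1 p.2 * f p.1) (g := fun p => k p.1 p.2 * f p.2)
      (fun p _ => mul_nonneg (hk _ _) (hf _).le) (fun p _ => mul_nonneg (hk _ _) (hf _).le)
      (fun p _ => by rw [mul_pow, mul_pow, Real.sq_sqrt (hf _).le, Real.sq_sqrt (hf _).le]; ring)
    simpa [hA, hB, hC, Fintype.sum_prod_type] using h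
  have hCle : C ≤ Real.sqrt A * Real.sqrt B := by
    calc C = Real.sqrt (C ^ 2) := (Real.sqrt_sq hC0).symm
      _ ≤ Real.sqrt (A * B) := Real.sqrt_le_sqrt hCS
      _ = Real.sqrt A * Real.sqrt B := Real.sqrt_mul hA0 B
  have hT : ∑ x, ∑ y, k x y * (Real.sqrt (f x) - Real.sqrt (f y)) ^ 2 = A + B - 2 * C := by
    have he : ∀ x y : Ω, k x y * (Real.sqrt (f x) - Real.sqrt (f y)) ^ 2 =
        k x y * f x + k x y * f y - 2 * (k x y * (Real.sqrt (f x) * Real.sqrt (f y))) := by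
      intro x y
      rw [sub_sq, Real.sq_sqrt (hf x).le, Real.sq_sqrt (hf y).le]; ring
    simp_rw [he, Finset.sum_sub_distrib, Finset.sum_add_distrib, ← Finset.mul_sum]
    rfl
  rw [hT]
  nlinarith [Real.sq_sqrt hA0, Real.sq_sqrt hB0, Real.sqrt_nonneg A, Real.sqrt_nonneg B]

lemma sum3_swap {α β : Type*} [Fintype α] [Fintype β] [DecidableEq β]
    (u : α → β → β → ℝ) :
    ∑ i, ∑ x, ∑ y ∈ Finset.univ.erase x, u i x y
      = ∑ x, ∑ y ∈ Finset.univ.erase x, ∑ i, u i x y := by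
  rw [Finset.sum_comm]
  exact Finset.sum_congr rfl fun x _ => Finset.sum_comm

lemma sum4_swap {α β : Type*} [Fintype α] [Fintype β] [DecidableEq α] [DecidableEq β]
    (t : α → α → β → β → ℝ) :
    ∑ i, ∑ j ∈ Finset.univ.erase i, ∑ x, ∑ y ∈ Finset.univ.erase x, t i j x y
      = ∑ x, ∑ y ∈ Finset.univ.erase x, ∑ i, ∑ j ∈ Finset.univ.erase i, t i j x y := by
  calc ∑ i, ∑ j ∈ Finset.univ.erase i, ∑ x, ∑ y ∈ Finset.univ.erase x, t i j x y
      = ∑ i, ∑ x, ∑ j ∈ Finset.univ.erase i, ∑ y ∈ Finset.univ.erase x, t i j x y :=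
        Finset.sum_congr rfl fun i _ => Finset.sum_comm
    _ = ∑ x, ∑ i, ∑ j ∈ Finset.univ.erase i, ∑ y ∈ Finset.univ.erase x, t i j x y :=
        Finset.sum_comm
    _ = ∑ x, ∑ i, ∑ y ∈ Finset.univ.erase x, ∑ j ∈ Finset.univ.erase i, t i j x y :=
        Finset.sum_congr rfl fun x _ => Finset.sum_congr rfl fun i _ => Finset.sum_comm
    _ = ∑ x, ∑ y ∈ Finset.univ.erase x, ∑ i, ∑ j ∈ Finset.univ.erase i, t i j x y :=
        Finset.sum_congr rfl fun x _ => Finset.sum_comm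

/-- fuzzy decomposition bound for the log-Sobolev constant:
ρ(Q) ≥ min{χ ρ(Q̂), min_i ρ(Q_i)}. -/
theorem fuzzy_decomposition_lsi
    {Ω I : Type*} [Fintype Ω] [Fintype I] [DecidableEq Ω] [DecidableEq I] [Nonempty I]
    (π : Ω → ℝ) (Q : Ω → Ω → ℝ) (a : Ω → I → ℝ)
    (hπ0 : ∀ x, 0 ≤ π x) (hπ1 : ∑ x, π x = 1)
    (hQnn : ∀ x y, x ≠ y → 0 ≤ Q x y)
    (hrev : ∀ x y, π x * Q x y = π y * Q y x)
    (ha0 : ∀ x i, 0 ≤ a x i) (ha1 : ∀ x i, a x i ≤ 1)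
    (hasum : ∀ x, ∑ i, a x i = 1)
    (πhat : I → ℝ) (hπhat : ∀ i, πhat i = ∑ x, a x i * π x)
    (hπhatpos : ∀ i, 0 < πhat i)
    (πi : I → Ω → ℝ) (hπi : ∀ i x, πi i x = a x i * π x / πhat i)
    (Qhat : I → I → ℝ)
    (hQhat : ∀ i j, i ≠ j → Qhat i j = (1 / πhat i) *
      ∑ x, ∑ y ∈ Finset.univ.erase x, a x i * a y j * π x * Q x y)
    -- couplings κ_{ij} of π_i and π_j, for pairs with Q̂(i,j) > 0
    (κ : I → I → Ω → Ω → ℝ)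
    (hκ0 : ∀ i j x y, 0 ≤ κ i j x y)
    (hκsupp : ∀ i j, 0 < Qhat i j → ∀ x y, κ i j x y ≠ 0 → 0 < a x i ∧ 0 < a y j)
    (hκmargi : ∀ i j, 0 < Qhat i j → ∀ x, ∑ y, κ i j x y = πi i x)
    (hκmargj : ∀ i j, 0 < Qhat i j → ∀ y, ∑ x, κ i j x y = πi j y)
    -- quality χ of the couplings
    (χ : ℝ) (hχ0 : 0 ≤ χ)
    (hχ : ∀ i j, 0 < Qhat i j → ∀ x y, x ≠ y → 0 < κ i j x y →
      χ * (πhat i * Qhat i j * κ i j x y) ≤ a x i * a y j * π x * Q x y)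
    -- ρ̂ is a valid log-Sobolev constant for the projection chain (Q̂, π̂)
    (rhohat : ℝ)
    (hproj : ∀ g : I → ℝ, (∀ i, 0 < g i) →
      (1 / 2) * ∑ i, ∑ j ∈ Finset.univ.erase i, πhat i * Qhat i j * (Real.sqrt (g i) - Real.sqrt (g j)) ^ 2 ≥
        rhohat * ((∑ i, πhat i * (g i * Real.log (g i))) - (∑ i, πhat i * g i) * Real.log (∑ i, πhat i * g i)))
    -- ρ_i is a valid log-Sobolev constant for each restriction chain (Q_i, π_i)
    (rho : I → ℝ)
    (hres : ∀ i, ∀ f : Ω → ℝ, (∀ x, 0 < f x) →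
      (1 / 2) * ∑ x ∈ Finset.univ.filter (fun x => 0 < a x i),
          ∑ y ∈ (Finset.univ.filter (fun y => 0 < a y i)).erase x,
            πi i x * (a y i * Q x y) * (Real.sqrt (f x) - Real.sqrt (f y)) ^ 2 ≥
        rho i * ((∑ x ∈ Finset.univ.filter (fun x => 0 < a x i), πi i x * (f x * Real.log (f x))) -
          (∑ x ∈ Finset.univ.filter (fun x => 0 < a x i), πi i x * f x) *
            Real.log (∑ x ∈ Finset.univ.filter (fun x => 0 < a x i), πi i x * f x))) :
    -- conclusion: min{χ ρ̂, min_i ρ_i} is a valid log-Sobolev constant for (Q, π)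
    ∀ f : Ω → ℝ, (∀ x, 0 < f x) →
      (1 / 2) * ∑ x, ∑ y ∈ Finset.univ.erase x, π x * Q x y * (Real.sqrt (f x) - Real.sqrt (f y)) ^ 2 ≥
        min (χ * rhohat) (Finset.univ.inf' Finset.univ_nonempty rho) *
          ((∑ x, π x * (f x * Real.log (f x))) - (∑ x, π x * f x) * Real.log (∑ x, π x * f x)) := by

  intro f hf
  set ρ := min (χ * rhohat) (Finset.univ.inf' Finset.univ_nonempty rho) with hρdef
  have hE0 : 0 ≤ ∑ x, ∑ y ∈ Finset.univ.erase x,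
      π x * Q x y * (Real.sqrt (f x) - Real.sqrt (f y)) ^ 2 := by
    refine sum_nonneg fun x _ => sum_nonneg fun y hy => ?_
    exact mul_nonneg (mul_nonneg (hπ0 x) (hQnn x y (Ne.symm (Finset.mem_erase.mp hy).1)))
      (sq_nonneg _)
  have hEnt0 : (∑ x, π x * f x) * Real.log (∑ x, π x * f x) ≤
      ∑ x, π x * (f x * Real.log (f x)) := ent_nonneg' π f hπ0 hπ1 hf
  rcases le_or_gt ρ 0 with hρ | hρ
  · have h1 : 0 ≤ (-ρ) * ((∑ x, π x * (f x * Real.log (f x))) -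
        (∑ x, π x * f x) * Real.log (∑ x, π x * f x)) :=
      mul_nonneg (by linarith) (by linarith)
    nlinarith
  -- main case : ρ > 0
  have hρ1 : ρ ≤ χ * rhohat := min_le_left _ _
  have hρ2 : ∀ i, ρ ≤ rho i := fun i =>
    le_trans (min_le_right _ _) (Finset.inf'_le _ (Finset.mem_univ i))
  have hχρ : 0 < χ * rhohat := lt_of_lt_of_le hρ hρ1
  have hχpos : 0 < χ := by
    rcases hχ0.eq_or_lt with h | h
    · rw [← h] at hχρ; simp at hχρ
    · exact h
  have hπhne : ∀ i, πhat i ≠ 0 := fun i => (hπhatpos i).ne'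
  have hπinn : ∀ i x, 0 ≤ πi i x := by
    intro i x; rw [hπi]
    exact div_nonneg (mul_nonneg (ha0 x i) (hπ0 x)) (hπhatpos i).le
  have hπiz : ∀ i x, ¬ 0 < a x i → πi i x = 0 := by
    intro i x h
    have h0 : a x i = 0 := le_antisymm (not_lt.mp h) (ha0 x i)
    rw [hπi, h0, zero_mul, zero_div]
  have hπisum : ∀ i, ∑ x, πi i x = 1 := by
    intro i
    simp_rw [hπi, div_eq_mul_inv, ← Finset.sum_mul, ← hπhat]
    exact mul_inv_cancel₀ (hπhne i)
  set g : I → ℝ := fun i => ∑ x, πi i x * f x with hgdef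
  have hgi : ∀ i, g i = ∑ x, πi i x * f x := fun i => rfl
  have hgpos : ∀ i, 0 < g i := by
    intro i
    obtain ⟨x, hx⟩ : ∃ x, 0 < a x i * π x := by
      by_contra h
      push_neg at h
      have : πhat i ≤ 0 := by rw [hπhat]; exact Finset.sum_nonpos fun x _ => h x
      exact absurd (hπhatpos i) (not_lt.mpr this)
    refine Finset.sum_pos' (fun y _ => mul_nonneg (hπinn i y) (hf y).le)
      ⟨x, Finset.mem_univ x, ?_⟩
    exact mul_pos (by rw [hπi]; exact div_pos hx (hπhatpos i)) (hf x)
  have hfilter : ∀ (i : I) (h : Ω → ℝ),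
      ∑ x ∈ Finset.univ.filter (fun x => 0 < a x i), πi i x * h x = ∑ x, πi i x * h x := by
    intro i h
    refine Finset.sum_subset (Finset.filter_subset _ _) (fun x _ hx => ?_)
    rw [hπiz i x (by simpa using hx), zero_mul]
  have hhatmul : ∀ (i : I) (h : Ω → ℝ),
      πhat i * ∑ x, πi i x * h x = ∑ x, a x i * π x * h x := by
    intro i h
    rw [Finset.mul_sum]
    refine Finset.sum_congr rfl fun x _ => ?_
    rw [hπi]; field_simp [hπhne i]
  have hsumswap : ∀ h : Ω → ℝ, ∑ i, ∑ x, a x i * π x * h x = ∑ x, π x * h x := by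
    intro h
    rw [Finset.sum_comm]
    refine Finset.sum_congr rfl fun x _ => ?_
    simp_rw [mul_assoc, ← Finset.sum_mul, hasum, one_mul]
  have hsumg : ∑ i, πhat i * g i = ∑ x, π x * f x := by
    simp_rw [hgi, hhatmul]; exact hsumswap f
  have hπhat1 : ∑ i, πhat i = 1 := by
    simp_rw [hπhat]
    rw [Finset.sum_comm]
    simp_rw [← Finset.sum_mul, hasum, one_mul]
    exact hπ1
  -- extend the restricted Dirichlet form to full sums
  have hDi : ∀ i : I, ∑ x ∈ Finset.univ.filter (fun x => 0 < a x i),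
        ∑ y ∈ (Finset.univ.filter (fun y => 0 < a y i)).erase x,
          πi i x * (a y i * Q x y) * (Real.sqrt (f x) - Real.sqrt (f y)) ^ 2
      = ∑ x, ∑ y ∈ Finset.univ.erase x,
          πi i x * (a y i * Q x y) * (Real.sqrt (f x) - Real.sqrt (f y)) ^ 2 := by
    intro i
    have hinner : ∀ x : Ω,
        ∑ y ∈ (Finset.univ.filter (fun y => 0 < a y i)).erase x,
          πi i x * (a y i * Q x y) * (Real.sqrt (f x) - Real.sqrt (f y)) ^ 2
        = ∑ y ∈ Finset.univ.erase x,
          πi i x * (a y i * Q x y) * (Real.sqrt (f x) - Real.sqrt (f y)) ^ 2 := by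
      intro x
      refine Finset.sum_subset (Finset.erase_subset_erase x (Finset.filter_subset _ _))
        (fun y hy' hy => ?_)
      have hyx : y ≠ x := (Finset.mem_erase.mp hy').1
      have hna : ¬ 0 < a y i := by
        intro hpos
        exact hy (Finset.mem_erase.mpr ⟨hyx, Finset.mem_filter.mpr ⟨Finset.mem_univ y, hpos⟩⟩)
      have h0 : a y i = 0 := le_antisymm (not_lt.mp hna) (ha0 y i)
      rw [h0]; ring
    calc ∑ x ∈ Finset.univ.filter (fun x => 0 < a x i),
          ∑ y ∈ (Finset.univ.filter (fun y => 0 < a y i)).erase x,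
            πi i x * (a y i * Q x y) * (Real.sqrt (f x) - Real.sqrt (f y)) ^ 2
        = ∑ x ∈ Finset.univ.filter (fun x => 0 < a x i),
          ∑ y ∈ Finset.univ.erase x,
            πi i x * (a y i * Q x y) * (Real.sqrt (f x) - Real.sqrt (f y)) ^ 2 :=
          Finset.sum_congr rfl fun x _ => hinner x
      _ = ∑ x, ∑ y ∈ Finset.univ.erase x,
            πi i x * (a y i * Q x y) * (Real.sqrt (f x) - Real.sqrt (f y)) ^ 2 := by
          refine Finset.sum_subset (Finset.filter_subset _ _) (fun x _ hx => ?_)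
          refine Finset.sum_eq_zero fun y _ => ?_
          rw [hπiz i x (by simpa using hx)]; ring
  have hlocal : ∀ i : I,
      ρ * (πhat i * ((∑ x, πi i x * (f x * Real.log (f x))) - g i * Real.log (g i)))
      ≤ πhat i * ((1/2) * ∑ x, ∑ y ∈ Finset.univ.erase x,
          πi i x * (a y i * Q x y) * (Real.sqrt (f x) - Real.sqrt (f y)) ^ 2) := by
    intro i
    have h := hres i f hf
    simp only [hfilter] at h
    rw [hDi i, ← hgi i] at h
    have hEnti : 0 ≤ (∑ x, πi i x * (f x * Real.log (f x))) - g i * Real.log (g i) := by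
      have h2 := ent_nonneg' (πi i) f (hπinn i) (hπisum i) hf
      rw [← hgi i] at h2
      linarith
    have h2 : ρ * ((∑ x, πi i x * (f x * Real.log (f x))) - g i * Real.log (g i))
        ≤ (1/2) * ∑ x, ∑ y ∈ Finset.univ.erase x,
            πi i x * (a y i * Q x y) * (Real.sqrt (f x) - Real.sqrt (f y)) ^ 2 :=
      le_trans (mul_le_mul_of_nonneg_right (hρ2 i) hEnti) h
    calc ρ * (πhat i * ((∑ x, πi i x * (f x * Real.log (f x))) - g i * Real.log (g i)))
        = πhat i * (ρ * ((∑ x, πi i x * (f x * Real.log (f x))) - g i * Real.log (g i))) := by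
          ring
      _ ≤ πhat i * ((1/2) * ∑ x, ∑ y ∈ Finset.univ.erase x,
            πi i x * (a y i * Q x y) * (Real.sqrt (f x) - Real.sqrt (f y)) ^ 2) :=
          mul_le_mul_of_nonneg_left h2 (hπhatpos i).le
  have hB : ρ * ((∑ x, π x * (f x * Real.log (f x))) - ∑ i, πhat i * (g i * Real.log (g i)))
      ≤ ∑ i, πhat i * ((1/2) * ∑ x, ∑ y ∈ Finset.univ.erase x,
          πi i x * (a y i * Q x y) * (Real.sqrt (f x) - Real.sqrt (f y)) ^ 2) := by
    have e1 : (∑ x, π x * (f x * Real.log (f x))) - ∑ i, πhat i * (g i * Real.log (g i))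
        = ∑ i, πhat i * ((∑ x, πi i x * (f x * Real.log (f x))) - g i * Real.log (g i)) := by
      simp_rw [mul_sub, Finset.sum_sub_distrib]
      congr 1
      rw [← hsumswap (fun x => f x * Real.log (f x))]
      exact Finset.sum_congr rfl fun i _ => (hhatmul i _).symm
    rw [e1, Finset.mul_sum]
    exact Finset.sum_le_sum fun i _ => hlocal i
  -- projection entropy is nonnegative
  have hEnthat0 : 0 ≤ (∑ i, πhat i * (g i * Real.log (g i)))
      - (∑ i, πhat i * g i) * Real.log (∑ i, πhat i * g i) := by
    have h2 := ent_nonneg' πhat g (fun i => (hπhatpos i).le) hπhat1 hgpos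
    linarith
  have hC : ρ * ((∑ i, πhat i * (g i * Real.log (g i)))
        - (∑ i, πhat i * g i) * Real.log (∑ i, πhat i * g i))
      ≤ χ * ((1/2) * ∑ i, ∑ j ∈ Finset.univ.erase i,
          πhat i * Qhat i j * (Real.sqrt (g i) - Real.sqrt (g j)) ^ 2) := by
    have hp : rhohat * ((∑ i, πhat i * (g i * Real.log (g i)))
        - (∑ i, πhat i * g i) * Real.log (∑ i, πhat i * g i))
        ≤ (1/2) * ∑ i, ∑ j ∈ Finset.univ.erase i,
          πhat i * Qhat i j * (Real.sqrt (g i) - Real.sqrt (g j)) ^ 2 := hproj g hgpos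
    have h1 := mul_le_mul_of_nonneg_right hρ1 hEnthat0
    have h2 := mul_le_mul_of_nonneg_left hp hχ0
    nlinarith [h1, h2]
  -- the pairwise coupling bound
  have hpair : ∀ i j : I, i ≠ j →
      χ * (πhat i * Qhat i j * (Real.sqrt (g i) - Real.sqrt (g j)) ^ 2)
      ≤ ∑ x, ∑ y ∈ Finset.univ.erase x,
          a x i * a y j * (π x * Q x y * (Real.sqrt (f x) - Real.sqrt (f y)) ^ 2) := by
    intro i j hij
    have hRHS0 : 0 ≤ ∑ x, ∑ y ∈ Finset.univ.erase x,
        a x i * a y j * (π x * Q x y * (Real.sqrt (f x) - Real.sqrt (f y)) ^ 2) := by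
      refine sum_nonneg fun x _ => sum_nonneg fun y hy => ?_
      have hyx : y ≠ x := (Finset.mem_erase.mp hy).1
      exact mul_nonneg (mul_nonneg (ha0 x i) (ha0 y j))
        (mul_nonneg (mul_nonneg (hπ0 x) (hQnn x y hyx.symm)) (sq_nonneg _))
    have hQh0 : 0 ≤ Qhat i j := by
      rw [hQhat i j hij]
      refine mul_nonneg (one_div_nonneg.mpr (hπhatpos i).le) (sum_nonneg fun x _ => sum_nonneg fun y hy => ?_)
      have hyx : y ≠ x := (Finset.mem_erase.mp hy).1
      exact mul_nonneg (mul_nonneg (mul_nonneg (ha0 x i) (ha0 y j)) (hπ0 x)) (hQnn x y hyx.symm)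
    rcases hQh0.eq_or_lt with hQ | hQ
    · rw [← hQ]
      simpa using hRHS0
    · have hA : ∑ x, ∑ y, κ i j x y * f x = g i := by
        simp_rw [← Finset.sum_mul, hκmargi i j hQ]
        rfl
      have hB2 : ∑ x, ∑ y, κ i j x y * f y = g j := by
        rw [Finset.sum_comm]
        simp_rw [← Finset.sum_mul, hκmargj i j hQ]
        rfl
      have hsq : (Real.sqrt (g i) - Real.sqrt (g j)) ^ 2
          ≤ ∑ x, ∑ y, κ i j x y * (Real.sqrt (f x) - Real.sqrt (f y)) ^ 2 := by
        rw [← hA, ← hB2]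
        exact coupling_sqrt_bound (κ i j) f (hκ0 i j) hf
      have hc : 0 ≤ χ * (πhat i * Qhat i j) :=
        mul_nonneg hχ0 (mul_nonneg (hπhatpos i).le hQ.le)
      have step1 : χ * (πhat i * Qhat i j * (Real.sqrt (g i) - Real.sqrt (g j)) ^ 2)
          ≤ χ * (πhat i * Qhat i j) *
            ∑ x, ∑ y, κ i j x y * (Real.sqrt (f x) - Real.sqrt (f y)) ^ 2 := by
        calc χ * (πhat i * Qhat i j * (Real.sqrt (g i) - Real.sqrt (g j)) ^ 2)
            = χ * (πhat i * Qhat i j) * (Real.sqrt (g i) - Real.sqrt (g j)) ^ 2 := by ring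
          _ ≤ χ * (πhat i * Qhat i j) *
              ∑ x, ∑ y, κ i j x y * (Real.sqrt (f x) - Real.sqrt (f y)) ^ 2 :=
            mul_le_mul_of_nonneg_left hsq hc
      refine le_trans step1 ?_
      rw [Finset.mul_sum]
      refine Finset.sum_le_sum fun x _ => ?_
      rw [Finset.mul_sum]
      rw [← Finset.sum_erase_add Finset.univ _ (Finset.mem_univ x)]
      have hdiag : χ * (πhat i * Qhat i j) *
          (κ i j x x * (Real.sqrt (f x) - Real.sqrt (f x)) ^ 2) = 0 := by
        simp
      rw [hdiag, add_zero]
      refine Finset.sum_le_sum fun y hy => ?_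
      have hyx : y ≠ x := (Finset.mem_erase.mp hy).1
      rcases (hκ0 i j x y).eq_or_lt with hk | hk
      · rw [← hk]
        have : 0 ≤ a x i * a y j * (π x * Q x y * (Real.sqrt (f x) - Real.sqrt (f y)) ^ 2) :=
          mul_nonneg (mul_nonneg (ha0 x i) (ha0 y j))
            (mul_nonneg (mul_nonneg (hπ0 x) (hQnn x y hyx.symm)) (sq_nonneg _))
        simpa using this
      · have h := mul_le_mul_of_nonneg_right (hχ i j hQ x y hyx.symm hk)
          (sq_nonneg (Real.sqrt (f x) - Real.sqrt (f y)))
        calc χ * (πhat i * Qhat i j) * (κ i j x y * (Real.sqrt (f x) - Real.sqrt (f y)) ^ 2)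
            = χ * (πhat i * Qhat i j * κ i j x y) * (Real.sqrt (f x) - Real.sqrt (f y)) ^ 2 := by
              ring
          _ ≤ a x i * a y j * π x * Q x y * (Real.sqrt (f x) - Real.sqrt (f y)) ^ 2 := h
          _ = a x i * a y j * (π x * Q x y * (Real.sqrt (f x) - Real.sqrt (f y)) ^ 2) := by ring
  -- sum the pairwise bounds over i ≠ j
  have hcross : χ * ((1/2) * ∑ i, ∑ j ∈ Finset.univ.erase i,
        πhat i * Qhat i j * (Real.sqrt (g i) - Real.sqrt (g j)) ^ 2)
      ≤ (1/2) * ∑ x, ∑ y ∈ Finset.univ.erase x,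
          (∑ i, ∑ j ∈ Finset.univ.erase i, a x i * a y j) *
            (π x * Q x y * (Real.sqrt (f x) - Real.sqrt (f y)) ^ 2) := by
    have e1 : χ * ((1/2) * ∑ i, ∑ j ∈ Finset.univ.erase i,
          πhat i * Qhat i j * (Real.sqrt (g i) - Real.sqrt (g j)) ^ 2)
        = (1/2) * ∑ i, ∑ j ∈ Finset.univ.erase i,
            χ * (πhat i * Qhat i j * (Real.sqrt (g i) - Real.sqrt (g j)) ^ 2) := by
      have hmul : χ * ∑ i, ∑ j ∈ Finset.univ.erase i,
          πhat i * Qhat i j * (Real.sqrt (g i) - Real.sqrt (g j)) ^ 2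
          = ∑ i, ∑ j ∈ Finset.univ.erase i,
            χ * (πhat i * Qhat i j * (Real.sqrt (g i) - Real.sqrt (g j)) ^ 2) := by
        rw [Finset.mul_sum]
        exact Finset.sum_congr rfl fun i _ => Finset.mul_sum _ _ _
      rw [← hmul]; ring
    rw [e1]
    have e2 : ∑ i, ∑ j ∈ Finset.univ.erase i,
          χ * (πhat i * Qhat i j * (Real.sqrt (g i) - Real.sqrt (g j)) ^ 2)
        ≤ ∑ i, ∑ j ∈ Finset.univ.erase i, ∑ x, ∑ y ∈ Finset.univ.erase x,
            a x i * a y j * (π x * Q x y * (Real.sqrt (f x) - Real.sqrt (f y)) ^ 2) := by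
      refine Finset.sum_le_sum fun i _ => Finset.sum_le_sum fun j hj => ?_
      exact hpair i j (Ne.symm (Finset.mem_erase.mp hj).1)
    have e3 : ∑ i, ∑ j ∈ Finset.univ.erase i, ∑ x, ∑ y ∈ Finset.univ.erase x,
          a x i * a y j * (π x * Q x y * (Real.sqrt (f x) - Real.sqrt (f y)) ^ 2)
        = ∑ x, ∑ y ∈ Finset.univ.erase x,
          (∑ i, ∑ j ∈ Finset.univ.erase i, a x i * a y j) *
            (π x * Q x y * (Real.sqrt (f x) - Real.sqrt (f y)) ^ 2) := by
      rw [sum4_swap]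
      refine Finset.sum_congr rfl fun x _ => Finset.sum_congr rfl fun y _ => ?_
      simp_rw [← Finset.sum_mul]
    calc (1/2 : ℝ) * ∑ i, ∑ j ∈ Finset.univ.erase i,
          χ * (πhat i * Qhat i j * (Real.sqrt (g i) - Real.sqrt (g j)) ^ 2)
        ≤ (1/2) * ∑ i, ∑ j ∈ Finset.univ.erase i, ∑ x, ∑ y ∈ Finset.univ.erase x,
            a x i * a y j * (π x * Q x y * (Real.sqrt (f x) - Real.sqrt (f y)) ^ 2) := by
          linarith
      _ = _ := by rw [e3]
  -- rewrite the local Dirichlet sum with coefficients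
  have hterm : ∀ (i : I) (x y : Ω),
      πhat i * (πi i x * (a y i * Q x y) * (Real.sqrt (f x) - Real.sqrt (f y)) ^ 2)
      = a x i * a y i * (π x * Q x y * (Real.sqrt (f x) - Real.sqrt (f y)) ^ 2) := by
    intro i x y
    rw [hπi]; field_simp [hπhne i]
  have hEloc : ∑ i, πhat i * ((1/2) * ∑ x, ∑ y ∈ Finset.univ.erase x,
        πi i x * (a y i * Q x y) * (Real.sqrt (f x) - Real.sqrt (f y)) ^ 2)
      = (1/2) * ∑ x, ∑ y ∈ Finset.univ.erase x,
          (∑ i, a x i * a y i) * (π x * Q x y * (Real.sqrt (f x) - Real.sqrt (f y)) ^ 2) := by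
    have e1 : ∀ i : I, πhat i * ((1/2) * ∑ x, ∑ y ∈ Finset.univ.erase x,
          πi i x * (a y i * Q x y) * (Real.sqrt (f x) - Real.sqrt (f y)) ^ 2)
        = (1/2) * ∑ x, ∑ y ∈ Finset.univ.erase x,
            a x i * a y i * (π x * Q x y * (Real.sqrt (f x) - Real.sqrt (f y)) ^ 2) := by
      intro i
      have e0 : πhat i * ∑ x, ∑ y ∈ Finset.univ.erase x,
            πi i x * (a y i * Q x y) * (Real.sqrt (f x) - Real.sqrt (f y)) ^ 2
          = ∑ x, ∑ y ∈ Finset.univ.erase x,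
            a x i * a y i * (π x * Q x y * (Real.sqrt (f x) - Real.sqrt (f y)) ^ 2) := by
        rw [Finset.mul_sum]
        refine Finset.sum_congr rfl fun x _ => ?_
        rw [Finset.mul_sum]
        exact Finset.sum_congr rfl fun y _ => hterm i x y
      calc πhat i * ((1/2) * ∑ x, ∑ y ∈ Finset.univ.erase x,
            πi i x * (a y i * Q x y) * (Real.sqrt (f x) - Real.sqrt (f y)) ^ 2)
          = (1/2) * (πhat i * ∑ x, ∑ y ∈ Finset.univ.erase x,
              πi i x * (a y i * Q x y) * (Real.sqrt (f x) - Real.sqrt (f y)) ^ 2) := by ring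
        _ = _ := by rw [e0]
    calc ∑ i, πhat i * ((1/2) * ∑ x, ∑ y ∈ Finset.univ.erase x,
          πi i x * (a y i * Q x y) * (Real.sqrt (f x) - Real.sqrt (f y)) ^ 2)
        = ∑ i, (1/2) * ∑ x, ∑ y ∈ Finset.univ.erase x,
            a x i * a y i * (π x * Q x y * (Real.sqrt (f x) - Real.sqrt (f y)) ^ 2) :=
          Finset.sum_congr rfl fun i _ => e1 i
      _ = (1/2) * ∑ i, ∑ x, ∑ y ∈ Finset.univ.erase x,
            a x i * a y i * (π x * Q x y * (Real.sqrt (f x) - Real.sqrt (f y)) ^ 2) := by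
          rw [← Finset.mul_sum]
      _ = (1/2) * ∑ x, ∑ y ∈ Finset.univ.erase x, ∑ i,
            a x i * a y i * (π x * Q x y * (Real.sqrt (f x) - Real.sqrt (f y)) ^ 2) := by
          rw [sum3_swap]
      _ = _ := by
          refine congrArg _ (Finset.sum_congr rfl fun x _ => Finset.sum_congr rfl fun y _ => ?_)
          simp_rw [← Finset.sum_mul]
  -- coefficient identity
  have hone : ∀ x y : Ω, (∑ i, a x i * a y i)
      + (∑ i, ∑ j ∈ Finset.univ.erase i, a x i * a y j) = 1 := by
    intro x y
    have htot : ∑ i, ∑ j, a x i * a y j = 1 := by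
      rw [← Finset.sum_mul_sum]
      rw [hasum x, hasum y, one_mul]
    have hsplit : ∀ i : I, ∑ j, a x i * a y j
        = a x i * a y i + ∑ j ∈ Finset.univ.erase i, a x i * a y j := by
      intro i
      rw [← Finset.sum_erase_add Finset.univ _ (Finset.mem_univ i)]
      ring
    calc (∑ i, a x i * a y i) + (∑ i, ∑ j ∈ Finset.univ.erase i, a x i * a y j)
        = ∑ i, (a x i * a y i + ∑ j ∈ Finset.univ.erase i, a x i * a y j) := by
          rw [Finset.sum_add_distrib]
      _ = ∑ i, ∑ j, a x i * a y j := Finset.sum_congr rfl fun i _ => (hsplit i).symm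
      _ = 1 := htot
  -- combine everything
  have hfinal : ∑ i, πhat i * ((1/2) * ∑ x, ∑ y ∈ Finset.univ.erase x,
        πi i x * (a y i * Q x y) * (Real.sqrt (f x) - Real.sqrt (f y)) ^ 2)
      + χ * ((1/2) * ∑ i, ∑ j ∈ Finset.univ.erase i,
        πhat i * Qhat i j * (Real.sqrt (g i) - Real.sqrt (g j)) ^ 2)
      ≤ (1/2) * ∑ x, ∑ y ∈ Finset.univ.erase x,
          π x * Q x y * (Real.sqrt (f x) - Real.sqrt (f y)) ^ 2 := by
    rw [hEloc]
    refine le_trans (add_le_add_right hcross _) (le_of_eq ?_)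
    have hSS : ∑ x, ∑ y ∈ Finset.univ.erase x,
          (∑ i, a x i * a y i) * (π x * Q x y * (Real.sqrt (f x) - Real.sqrt (f y)) ^ 2)
        + ∑ x, ∑ y ∈ Finset.univ.erase x,
          (∑ i, ∑ j ∈ Finset.univ.erase i, a x i * a y j) *
            (π x * Q x y * (Real.sqrt (f x) - Real.sqrt (f y)) ^ 2)
        = ∑ x, ∑ y ∈ Finset.univ.erase x,
            π x * Q x y * (Real.sqrt (f x) - Real.sqrt (f y)) ^ 2 := by
      rw [← Finset.sum_add_distrib]
      refine Finset.sum_congr rfl fun x _ => ?_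
      rw [← Finset.sum_add_distrib]
      refine Finset.sum_congr rfl fun y _ => ?_
      rw [← add_mul, hone x y, one_mul]
    calc (1/2 : ℝ) * ∑ x, ∑ y ∈ Finset.univ.erase x,
          (∑ i, a x i * a y i) * (π x * Q x y * (Real.sqrt (f x) - Real.sqrt (f y)) ^ 2)
        + (1/2) * ∑ x, ∑ y ∈ Finset.univ.erase x,
          (∑ i, ∑ j ∈ Finset.univ.erase i, a x i * a y j) *
            (π x * Q x y * (Real.sqrt (f x) - Real.sqrt (f y)) ^ 2)
        = (1/2) * (∑ x, ∑ y ∈ Finset.univ.erase x,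
            (∑ i, a x i * a y i) * (π x * Q x y * (Real.sqrt (f x) - Real.sqrt (f y)) ^ 2)
          + ∑ x, ∑ y ∈ Finset.univ.erase x,
            (∑ i, ∑ j ∈ Finset.univ.erase i, a x i * a y j) *
              (π x * Q x y * (Real.sqrt (f x) - Real.sqrt (f y)) ^ 2)) := by ring
      _ = _ := by rw [hSS]
  -- final assembly
  rw [ge_iff_le, ← hsumg]
  calc ρ * ((∑ x, π x * (f x * Real.log (f x)))
        - (∑ i, πhat i * g i) * Real.log (∑ i, πhat i * g i))
      = ρ * ((∑ x, π x * (f x * Real.log (f x))) - ∑ i, πhat i * (g i * Real.log (g i)))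
        + ρ * ((∑ i, πhat i * (g i * Real.log (g i)))
          - (∑ i, πhat i * g i) * Real.log (∑ i, πhat i * g i)) := by ring
    _ ≤ ∑ i, πhat i * ((1/2) * ∑ x, ∑ y ∈ Finset.univ.erase x,
          πi i x * (a y i * Q x y) * (Real.sqrt (f x) - Real.sqrt (f y)) ^ 2)
        + χ * ((1/2) * ∑ i, ∑ j ∈ Finset.univ.erase i,
          πhat i * Qhat i j * (Real.sqrt (g i) - Real.sqrt (g j)) ^ 2) := add_le_add hB hC
    _ ≤ (1/2) * ∑ x, ∑ y ∈ Finset.univ.erase x,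
          π x * Q x y * (Real.sqrt (f x) - Real.sqrt (f y)) ^ 2 := hfinal
end

section
/- In the glued-graphs example, the projection chain rate equals Q̂(1,2) = Q̂(2,1) = (2/D_𝒢)(Σ_{x∈H} d_G(x) + #(G∖H)). -/
open Finset

/-- The glued graph state space: two copies of `V` glued along `H`
(vertices of `H` are represented with second coordinate `0`). -/
def Glued {V : Type*} (H : Finset V) : Type _ := {p : V × Fin 2 // p.1 ∈ H → p.2 = 0}

instance {V : Type*} [Fintype V] [DecidableEq V] (H : Finset V) : Fintype (Glued H) :=
  Subtype.fintype _

instance {V : Type*} [DecidableEq V] (H : Finset V) : DecidableEq (Glued H) :=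
  Subtype.instDecidableEq

/-- Adjacency in the glued graph: edges inside each copy of `G` (with `H`
vertices shared by both copies), plus an edge between the two copies of
each vertex outside `H`. -/
def GluedAdj {V : Type*} [DecidableEq V] (G : SimpleGraph V) [DecidableRel G.Adj]
    (H : Finset V) (x y : Glued H) : Prop :=
  (G.Adj x.1.1 y.1.1 ∧ (x.1.2 = y.1.2 ∨ x.1.1 ∈ H ∨ y.1.1 ∈ H)) ∨
    (x.1.1 = y.1.1 ∧ x.1.1 ∉ H ∧ x.1.2 ≠ y.1.2)

instance {V : Type*} [DecidableEq V] (G : SimpleGraph V) [DecidableRel G.Adj]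
    (H : Finset V) : DecidableRel (GluedAdj G H) := fun _ _ => by
  unfold GluedAdj; infer_instance

/-- Total degree of the glued graph. -/
def DGlued {V : Type*} [Fintype V] [DecidableEq V] (G : SimpleGraph V)
    [DecidableRel G.Adj] (H : Finset V) : ℕ :=
  ∑ x : Glued H, (if x.1.1 ∈ H then 2 * G.degree x.1.1 else G.degree x.1.1 + 1)

/-- The fuzzy weight of a glued vertex: `(1/2, 1/2)` on `H`, `(1,0)` on the
first copy and `(0,1)` on the second copy. -/
noncomputable def aGlued {V : Type*} [DecidableEq V] (H : Finset V)
    (x : Glued H) (i : Fin 2) : ℝ :=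
  if x.1.1 ∈ H then 1 / 2 else if x.1.2 = i then 1 else 0

/-- Embedding of `V` as the first copy of the glued graph. -/
def eG {V : Type*} (H : Finset V) (v : V) : Glued H := ⟨(v, 0), fun _ => rfl⟩

/-- Embedding of `V` as the second copy of the glued graph (with `H` glued). -/
def fG {V : Type*} [DecidableEq V] (H : Finset V) (u : V) : Glued H :=
  if h : u ∈ H then ⟨(u, 0), fun _ => rfl⟩ else ⟨(u, 1), fun hu => absurd hu h⟩

/-- in the glued-graphs example the projection rate is
`Q̂(1,2) = (2/D_𝒢)(Σ_{x∈H} d_G(x) + #(G∖H))`. -/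
theorem glued_graphs_projection_rate
    {V : Type*} [Fintype V] [DecidableEq V] (G : SimpleGraph V) [DecidableRel G.Adj]
    (H : Finset V)
    (hconn : G.Connected)
    (hind : ∀ x ∈ H, ∀ y ∈ H, ¬ G.Adj x y)
    (hD : 0 < DGlued G H)
    (Λ₁ Λ₂ : Finset (Glued H))
    (hΛ₁ : Λ₁ = Finset.univ.filter (fun x : Glued H => x.1.2 = 0))
    (hΛ₂ : Λ₂ = Finset.univ.filter (fun x : Glued H => x.1.2 = 1 ∨ x.1.1 ∈ H))
    (πQ : Glued H → Glued H → ℝ)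
    (hπQ : ∀ x y, πQ x y = if GluedAdj G H x y then 1 / (DGlued G H : ℝ) else 0) :
    (1 / ((1 : ℝ) / 2)) * ∑ x ∈ Λ₁, ∑ y ∈ Λ₂.erase x,
        aGlued H x 0 * aGlued H y 1 * πQ x y =
      (2 / (DGlued G H : ℝ)) *
        ((∑ h ∈ H, (G.degree h : ℝ)) + ((Finset.univ \ H).card : ℝ)) := by
  classical
  subst hΛ₁ hΛ₂
  set D : ℝ := (DGlued G H : ℝ) with hDdef
  have hDne : D ≠ 0 := Nat.cast_ne_zero.mpr hD.ne'
  set F : Glued H → Glued H → ℝ := fun x y => aGlued H x 0 * aGlued H y 1 * πQ x y with hF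
  -- the summand in the goal is `F`
  have hgoalF : (∑ x ∈ Finset.univ.filter (fun x : Glued H => x.1.2 = 0),
      ∑ y ∈ (Finset.univ.filter (fun y : Glued H => y.1.2 = 1 ∨ y.1.1 ∈ H)).erase x,
        aGlued H x 0 * aGlued H y 1 * πQ x y)
      = ∑ x ∈ Finset.univ.filter (fun x : Glued H => x.1.2 = 0),
        ∑ y ∈ (Finset.univ.filter (fun y : Glued H => y.1.2 = 1 ∨ y.1.1 ∈ H)).erase x,
          F x y := rfl
  rw [hgoalF]
  -- the diagonal term vanishes, so the `erase` can be dropped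
  have hdiag : ∀ x : Glued H, F x x = 0 := by
    intro x
    have hna : ¬ GluedAdj G H x x := by
      unfold GluedAdj; simp
    simp [hF, hπQ, hna]
  have herase : ∀ x : Glued H,
      (∑ y ∈ (Finset.univ.filter (fun y : Glued H => y.1.2 = 1 ∨ y.1.1 ∈ H)).erase x, F x y)
      = ∑ y ∈ Finset.univ.filter (fun y : Glued H => y.1.2 = 1 ∨ y.1.1 ∈ H), F x y :=
    fun x => Finset.sum_erase _ (hdiag x)
  rw [Finset.sum_congr rfl (fun x _ => herase x)]
  -- reindexing facts
  have hfG_fst : ∀ u : V, (fG H u).1.1 = u := by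
    intro u; unfold fG; by_cases h : u ∈ H <;> simp [h]
  have hfG_mem : ∀ u : V,
      fG H u ∈ Finset.univ.filter (fun y : Glued H => y.1.2 = 1 ∨ y.1.1 ∈ H) := by
    intro u
    simp only [Finset.mem_filter, Finset.mem_univ, true_and]
    unfold fG
    by_cases h : u ∈ H <;> simp [h]
  have hfG_inv : ∀ y ∈ Finset.univ.filter (fun y : Glued H => y.1.2 = 1 ∨ y.1.1 ∈ H),
      fG H y.1.1 = y := by
    intro a ha
    simp only [Finset.mem_filter, Finset.mem_univ, true_and] at ha
    unfold fG
    by_cases h : a.1.1 ∈ H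
    · refine (dif_pos h).trans ?_
      exact Subtype.ext (Prod.ext rfl (a.2 h).symm)
    · refine (dif_neg h).trans ?_
      rcases ha with h1 | h1
      · exact Subtype.ext (Prod.ext rfl h1.symm)
      · exact absurd h1 h
  have heG_mem : ∀ v : V,
      eG H v ∈ Finset.univ.filter (fun x : Glued H => x.1.2 = 0) := by
    intro v; exact Finset.mem_filter.2 ⟨Finset.mem_univ _, rfl⟩
  have heG_inv : ∀ x ∈ Finset.univ.filter (fun x : Glued H => x.1.2 = 0),
      eG H x.1.1 = x := by
    intro a ha
    simp only [Finset.mem_filter, Finset.mem_univ, true_and] at ha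
    exact Subtype.ext (Prod.ext rfl ha.symm)
  -- reindex both sums by `V`
  have hreindex : (∑ x ∈ Finset.univ.filter (fun x : Glued H => x.1.2 = 0),
      ∑ y ∈ Finset.univ.filter (fun y : Glued H => y.1.2 = 1 ∨ y.1.1 ∈ H), F x y)
      = ∑ v : V, ∑ u : V, F (eG H v) (fG H u) := by
    have hinner : ∀ x : Glued H,
        (∑ y ∈ Finset.univ.filter (fun y : Glued H => y.1.2 = 1 ∨ y.1.1 ∈ H), F x y)
        = ∑ u : V, F x (fG H u) := by
      intro x
      refine Finset.sum_nbij' (fun y => y.1.1) (fG H) (fun a _ => Finset.mem_univ _)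
        (fun a _ => hfG_mem a) hfG_inv (fun a _ => hfG_fst a) ?_
      intro a ha
      rw [hfG_inv a ha]
    rw [Finset.sum_congr rfl (fun x _ => hinner x)]
    refine Finset.sum_nbij' (fun x => x.1.1) (eG H) (fun a _ => Finset.mem_univ _)
      (fun a _ => heG_mem a) heG_inv (fun a _ => rfl) ?_
    intro a ha
    rw [heG_inv a ha]
  rw [hreindex]
  -- values of the weights
  have ha0 : ∀ v : V, aGlued H (eG H v) 0 = if v ∈ H then 1/2 else 1 := by
    intro v; unfold aGlued eG; simp
  have ha1 : ∀ u : V, aGlued H (fG H u) 1 = if u ∈ H then 1/2 else 1 := by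
    intro u; unfold aGlued fG; by_cases h : u ∈ H <;> simp [h]
  -- adjacency in the two cases
  have hadjH : ∀ v u : V, u ∈ H → (GluedAdj G H (eG H v) (fG H u) ↔ G.Adj v u) := by
    intro v u hu
    rw [show fG H u = (⟨(u, 0), fun _ => rfl⟩ : Glued H) from dif_pos hu]
    unfold GluedAdj eG
    simp [hu]
  have hadjN : ∀ v u : V, u ∉ H →
      (GluedAdj G H (eG H v) (fG H u) ↔ (G.Adj v u ∧ v ∈ H) ∨ v = u) := by
    intro v u hu
    rw [show fG H u = (⟨(u, 1), fun h => absurd h hu⟩ : Glued H) from dif_neg hu]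
    unfold GluedAdj eG
    constructor
    · rintro (⟨h1, h2⟩ | ⟨h1, _, _⟩)
      · rcases h2 with h2 | h2 | h2
        · exact absurd h2 (by simp)
        · exact Or.inl ⟨h1, h2⟩
        · exact absurd h2 hu
      · exact Or.inr h1
    · rintro (⟨h1, h2⟩ | h1)
      · exact Or.inl ⟨h1, Or.inr (Or.inl h2)⟩
      · refine Or.inr ⟨h1, ?_, by simp⟩
        rw [h1]; exact hu
  -- closed form of `F` on `H`-second-coordinates
  have hFH : ∀ v u : V, u ∈ H →
      F (eG H v) (fG H u) = if G.Adj v u then 1/(2*D) else 0 := by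
    intro v u hu
    show aGlued H (eG H v) 0 * aGlued H (fG H u) 1 * πQ (eG H v) (fG H u) = _
    rw [ha0, ha1, hπQ, if_pos hu]
    by_cases hadj : G.Adj v u
    · have hv : v ∉ H := fun hv => hind v hv u hu hadj
      rw [if_pos ((hadjH v u hu).2 hadj), if_neg hv, if_pos hadj]
      ring
    · rw [if_neg (fun h => hadj ((hadjH v u hu).1 h)), if_neg hadj]
      ring
  -- closed form of `F` off `H`
  have hFN : ∀ v u : V, u ∉ H →
      F (eG H v) (fG H u) =
        (if v ∈ H ∧ G.Adj v u then 1/(2*D) else 0) + (if v = u then 1/D else 0) := by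
    intro v u hu
    show aGlued H (eG H v) 0 * aGlued H (fG H u) 1 * πQ (eG H v) (fG H u) = _
    rw [ha0, ha1, hπQ, if_neg hu]
    by_cases hv : v ∈ H
    · have hvu : v ≠ u := fun h => hu (h ▸ hv)
      rw [if_pos hv, if_neg hvu]
      by_cases hadj : G.Adj v u
      · rw [if_pos ((hadjN v u hu).2 (Or.inl ⟨hadj, hv⟩)),
          if_pos (show v ∈ H ∧ G.Adj v u from ⟨hv, hadj⟩)]
        ring
      · have hng : ¬ GluedAdj G H (eG H v) (fG H u) := by
          intro h
          rcases (hadjN v u hu).1 h with ⟨h1, _⟩ | h1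
          · exact hadj h1
          · exact hvu h1
        rw [if_neg hng, if_neg (show ¬(v ∈ H ∧ G.Adj v u) from fun h => hadj h.2)]
        ring
    · have hng1 : ¬(v ∈ H ∧ G.Adj v u) := fun h => hv h.1
      rw [if_neg hv, if_neg hng1]
      by_cases hvu : v = u
      · rw [if_pos ((hadjN v u hu).2 (Or.inr hvu)), if_pos hvu]
        ring
      · have hng : ¬ GluedAdj G H (eG H v) (fG H u) := by
          intro h
          rcases (hadjN v u hu).1 h with ⟨_, h2⟩ | h2
          · exact hv h2
          · exact hvu h2
        rw [if_neg hng, if_neg hvu]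
        ring
  -- degree counting
  have hsum_adj : ∀ w : V, (∑ v : V, (if G.Adj w v then (1/(2*D)) else 0))
      = (G.degree w : ℝ) * (1/(2*D)) := by
    intro w
    rw [Finset.sum_ite, Finset.sum_const, Finset.sum_const_zero, add_zero, nsmul_eq_mul]
    congr 1
    rw [← SimpleGraph.neighborFinset_eq_filter, SimpleGraph.card_neighborFinset_eq_degree]
  have hsum_adj' : ∀ w : V, (∑ v : V, (if G.Adj v w then (1/(2*D)) else 0))
      = (G.degree w : ℝ) * (1/(2*D)) := by
    intro w
    rw [Finset.sum_congr rfl fun v (_ : v ∈ Finset.univ) =>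
      if_congr (G.adj_comm v w) rfl rfl]
    exact hsum_adj w
  -- the `u ∈ H` part of the sum
  have hB : (∑ v : V, ∑ u ∈ H, F (eG H v) (fG H u))
      = ∑ u ∈ H, (G.degree u : ℝ) * (1/(2*D)) := by
    rw [Finset.sum_comm]
    refine Finset.sum_congr rfl fun u hu => ?_
    rw [Finset.sum_congr rfl fun v _ => hFH v u hu]
    exact hsum_adj' u
  -- the first piece of the `u ∉ H` part
  have hP : (∑ v : V, ∑ u ∈ Finset.univ \ H, (if v ∈ H ∧ G.Adj v u then 1/(2*D) else 0))
      = ∑ u ∈ H, (G.degree u : ℝ) * (1/(2*D)) := by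
    have h1 : ∀ v : V,
        (∑ u ∈ Finset.univ \ H, (if v ∈ H ∧ G.Adj v u then 1/(2*D) else 0))
        = ∑ u : V, (if v ∈ H ∧ G.Adj v u then 1/(2*D) else 0) := by
      intro v
      apply Finset.sum_subset Finset.sdiff_subset
      intro u _ hu
      have huH : u ∈ H := by simpa using hu
      rw [if_neg]
      rintro ⟨hv, hadj⟩
      exact hind v hv u huH hadj
    rw [Finset.sum_congr rfl fun v _ => h1 v]
    have e1 : ∀ v : V, (∑ u : V, (if v ∈ H ∧ G.Adj v u then 1/(2*D) else 0))
        = if v ∈ H then ∑ u : V, (if G.Adj v u then 1/(2*D) else 0) else 0 := by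
      intro v
      by_cases hv : v ∈ H <;> simp [hv]
    rw [Finset.sum_congr rfl fun v _ => e1 v, ← Finset.sum_filter,
      Finset.filter_mem_eq_inter, Finset.univ_inter]
    exact Finset.sum_congr rfl fun v _ => hsum_adj v
  -- the second piece of the `u ∉ H` part
  have hQ : (∑ v : V, ∑ u ∈ Finset.univ \ H, (if v = u then 1/D else 0))
      = ((Finset.univ \ H).card : ℝ) * (1/D) := by
    rw [Finset.sum_comm]
    rw [Finset.sum_congr rfl fun u _ => by
      rw [Finset.sum_ite_eq' Finset.univ u (fun _ => 1/D), if_pos (Finset.mem_univ u)]]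
    rw [Finset.sum_const, nsmul_eq_mul]
  -- the `u ∉ H` part of the sum
  have hA : (∑ v : V, ∑ u ∈ Finset.univ \ H, F (eG H v) (fG H u))
      = (∑ u ∈ H, (G.degree u : ℝ) * (1/(2*D))) + ((Finset.univ \ H).card : ℝ) * (1/D) := by
    have h1 : ∀ v : V, (∑ u ∈ Finset.univ \ H, F (eG H v) (fG H u))
        = (∑ u ∈ Finset.univ \ H, (if v ∈ H ∧ G.Adj v u then 1/(2*D) else 0))
          + ∑ u ∈ Finset.univ \ H, (if v = u then 1/D else 0) := by
      intro v
      rw [← Finset.sum_add_distrib]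
      refine Finset.sum_congr rfl fun u hu => ?_
      exact hFN v u (by simpa using (Finset.mem_sdiff.1 hu).2)
    rw [Finset.sum_congr rfl fun v _ => h1 v, Finset.sum_add_distrib, hP, hQ]
  -- split the inner sum and conclude
  have hsplit : (∑ v : V, ∑ u : V, F (eG H v) (fG H u))
      = (∑ v : V, ∑ u ∈ Finset.univ \ H, F (eG H v) (fG H u))
        + ∑ v : V, ∑ u ∈ H, F (eG H v) (fG H u) := by
    rw [← Finset.sum_add_distrib]
    exact Finset.sum_congr rfl fun v _ =>
      (Finset.sum_sdiff (Finset.subset_univ H)).symm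
  rw [hsplit, hA, hB, ← Finset.sum_mul]
  field_simp
  ring
end
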